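/- arXiv:1408.4471 — 10 statements merged into one kernel-verified Lean document; each statement's English description precedes it below -/
import Mathlib

section
/- Let B = [B_F B_C] be an oriented incidence matrix of a graph on n vertices with a spanning-forest decomposition, cut-set matrix R, and diagonal real weight matrix W (whose entries may be negative), and let c be the dimension of the null space of Bᵀ. Let L_e(F)^{1/2} denote the positive-definite square root of L_e(F) = B_Fᵀ·B_F. Then the real symmetric matrices L = B·W·Bᵀ, R·W·Rᵀ, and L_e(F)^{1/2}·R·W·Rᵀ·L_e(F)^{1/2} satisfy: the number of positive eigenvalues (counted with multiplicity) of L equals that of R·W·Rᵀ and that of L_e(F)^{1/2}·R·W·Rᵀ·L_e(F)^{1/2}; the same holds for the number of negative eigenvalues; and the multiplicity of the eigenvalue 0 of L equals the multiplicity of the eigenvalue 0 of R·W·Rᵀ plus c. -/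
open Matrix

/-- `B` is an oriented incidence matrix: every column has exactly one `1`,
exactly one `-1`, and zeros elsewhere. -/
def IsIncidenceMatrix {V E : Type*} (B : Matrix V E ℝ) : Prop :=
  ∀ e : E, ∃ i j : V, i ≠ j ∧ B i e = 1 ∧ B j e = -1 ∧
    ∀ k : V, k ≠ i → k ≠ j → B k e = 0

/-- The square root of a positive semidefinite matrix, as defined in the older Mathlib
(`Matrix.PosSemidef.sqrt`, since removed). -/
noncomputable def Matrix.PosSemidef.sqrt {n 𝕜 : Type*} [Fintype n] [RCLike 𝕜] [PartialOrder 𝕜] [DecidableEq n]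
    {A : Matrix n n 𝕜} (hA : A.PosSemidef) : Matrix n n 𝕜 :=
  (hA.1.eigenvectorUnitary : Matrix n n 𝕜) * diagonal ((↑) ∘ (√·) ∘ hA.1.eigenvalues) *
    (star hA.1.eigenvectorUnitary : Matrix n n 𝕜)

/-!
Both sign counts are invariant under congruence by a matrix with a left inverse (Sylvester's law
of inertia): if `A = P X Pᵀ` and `Q P = 1`, then `x ↦ Pᵀ x` pulls the quadratic form of `X` back
to that of `A`, and `y ↦ Qᵀ y` pulls the form of `A` back to that of `X`. A linear map pulling a
diagonal form `∑ eᵢ yᵢ²` back to `∑ dⱼ xⱼ²` forces `#{d > 0} ≤ #{e > 0}`: restricted to the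
coordinates where `d > 0` and followed by the projection onto those where `e > 0`, it is injective.

Since every column of `B_C` lies in the column span of `B_F`, we have `B_F T = B_C`, hence
`B = B_F R` and `L = B_F (R W Rᵀ) B_Fᵀ`, where `B_F` has the left inverse `L_e(F)⁻¹ B_Fᵀ`.
The third matrix is `M (R W Rᵀ) Mᵀ` for the symmetric square root `M` of `L_e(F)`, which
has the left inverse `L_e(F)⁻¹ M`. For the zero eigenvalues, `R` has a right inverse, so
`ker Bᵀ = ker B_Fᵀ` has dimension `n - |F|`, and the three counts of each matrix add up to its size.
-/

open Finset

section WeightedSquares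

variable {m n : Type*} [Fintype m] [Fintype n]

theorem card_pos_le_of_sum_mul_sq_eq (d : m → ℝ) (e : n → ℝ) (φ : (m → ℝ) →ₗ[ℝ] (n → ℝ))
    (hφ : ∀ x, ∑ i, e i * φ x i ^ 2 = ∑ j, d j * x j ^ 2) :
    #{j | 0 < d j} ≤ #{i | 0 < e i} := by
  let extend := Function.ExtendByZero.linearMap ℝ (Subtype.val : {j // 0 < d j} → m)
  have extend_sum (x : {j // 0 < d j} → ℝ) :
      ∑ j, d j * extend x j ^ 2 = ∑ j : {j // 0 < d j}, d j * x j ^ 2 := by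
    rw [← Fintype.sum_subtype_add_sum_subtype (fun j => 0 < d j)]
    have extend_val (j : {j // 0 < d j}) : extend x j = x j :=
      Subtype.val_injective.extend_apply _ _ _
    have extend_out (j : {j // ¬0 < d j}) : extend x j = 0 :=
      Function.extend_apply' _ _ _ fun ⟨k, hk⟩ => j.2 (hk ▸ k.2)
    simp [extend_val, extend_out]
  let Φ := LinearMap.funLeft ℝ ℝ (Subtype.val : {i // 0 < e i} → n) ∘ₗ φ ∘ₗ extend
  have hΦ : Function.Injective Φ := by
    rw [← LinearMap.ker_eq_bot, LinearMap.ker_eq_bot']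
    intro x hx
    have hle : ∑ j : {j // 0 < d j}, d j * x j ^ 2 ≤ 0 := by
      rw [← extend_sum, ← hφ]
      refine sum_nonpos fun i _ => ?_
      by_cases hi : 0 < e i
      · simp [show φ (extend x) i = 0 from congrFun hx ⟨i, hi⟩]
      · exact mul_nonpos_of_nonpos_of_nonneg (not_lt.1 hi) (sq_nonneg _)
    have hnonneg (j : {j // 0 < d j}) : 0 ≤ d j * x j ^ 2 := by
      have := j.2
      positivity
    have hzero := (sum_eq_zero_iff_of_nonneg fun j _ => hnonneg j).1
      (le_antisymm hle (sum_nonneg fun j _ => hnonneg j))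
    funext j
    simpa [j.2.ne'] using hzero j (mem_univ _)
  simpa [Fintype.card_subtype] using LinearMap.finrank_le_finrank_of_injective hΦ

theorem card_neg_le_of_sum_mul_sq_eq (d : m → ℝ) (e : n → ℝ) (φ : (m → ℝ) →ₗ[ℝ] (n → ℝ))
    (hφ : ∀ x, ∑ i, e i * φ x i ^ 2 = ∑ j, d j * x j ^ 2) :
    #{j | d j < 0} ≤ #{i | e i < 0} := by
  simpa using card_pos_le_of_sum_mul_sq_eq (-d) (-e) φ (by simpa using hφ)

theorem card_pos_add_card_neg_add_card_zero (f : m → ℝ) :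
    #{i | 0 < f i} + #{i | f i < 0} + #{i | f i = 0} = Fintype.card m := by
  classical
  rw [← card_union_of_disjoint, ← card_union_of_disjoint, ← card_univ]
  · congr 1
    ext i
    simp only [mem_union, mem_filter, mem_univ, true_and, iff_true]
    grind
  all_goals
    simp only [disjoint_left, mem_union, mem_filter, mem_univ, true_and]
    grind

end WeightedSquares

namespace Matrix

theorem dotProduct_mul_mul_transpose_mulVec {m n : Type*} [Fintype m] [Fintype n]
    (P : Matrix m n ℝ) (X : Matrix n n ℝ) (x : m → ℝ) :
    x ⬝ᵥ (P * X * Pᵀ) *ᵥ x = (Pᵀ *ᵥ x) ⬝ᵥ X *ᵥ (Pᵀ *ᵥ x) := by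
  rw [← mulVec_mulVec, ← mulVec_mulVec, dotProduct_mulVec x P, ← mulVec_transpose]

namespace IsHermitian

variable {m n : Type*} [Fintype m] [Fintype n] [DecidableEq m] [DecidableEq n]
  {A : Matrix m m ℝ} {B : Matrix n n ℝ}

theorem dotProduct_mulVec_eq_sum_eigenvalues (hA : A.IsHermitian) (x : m → ℝ) :
    x ⬝ᵥ A *ᵥ x =
      ∑ i, hA.eigenvalues i * ((hA.eigenvectorUnitary : Matrix m m ℝ)ᵀ *ᵥ x) i ^ 2 := by
  conv_lhs => rw [hA.spectral_theorem, Unitary.conjStarAlgAut_apply, star_eq_conjTranspose,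
    conjTranspose_eq_transpose_of_trivial, dotProduct_mul_mul_transpose_mulVec]
  simp [dotProduct, mulVec_diagonal, sq, mul_left_comm]

theorem exists_sum_eigenvalues_mul_sq_eq (hA : A.IsHermitian) (hB : B.IsHermitian)
    (φ : (m → ℝ) →ₗ[ℝ] (n → ℝ)) (hφ : ∀ x, φ x ⬝ᵥ B *ᵥ φ x = x ⬝ᵥ A *ᵥ x) :
    ∃ Φ : (m → ℝ) →ₗ[ℝ] (n → ℝ),
      ∀ z, ∑ i, hB.eigenvalues i * Φ z i ^ 2 = ∑ j, hA.eigenvalues j * z j ^ 2 := by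
  set U : Matrix m m ℝ := (hA.eigenvectorUnitary : Matrix m m ℝ)
  have hUU : Uᵀ * U = 1 := by
    simpa [U, star_eq_conjTranspose] using Unitary.coe_star_mul_self hA.eigenvectorUnitary
  refine ⟨(hB.eigenvectorUnitary : Matrix n n ℝ)ᵀ.mulVecLin ∘ₗ φ ∘ₗ U.mulVecLin, fun z => ?_⟩
  have hz : Uᵀ *ᵥ U *ᵥ z = z := by rw [mulVec_mulVec, hUU, one_mulVec]
  have := hφ (U *ᵥ z)
  rwa [hB.dotProduct_mulVec_eq_sum_eigenvalues, hA.dotProduct_mulVec_eq_sum_eigenvalues, hz]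
    at this

theorem inertia_eq_of_eq_mul_mul_transpose (hA : A.IsHermitian) (hB : B.IsHermitian)
    {P : Matrix m n ℝ} {Q : Matrix n m ℝ} (hQP : Q * P = 1) (hAB : A = P * B * Pᵀ) :
    #{i | 0 < hA.eigenvalues i} = #{i | 0 < hB.eigenvalues i} ∧
      #{i | hA.eigenvalues i < 0} = #{i | hB.eigenvalues i < 0} := by
  obtain ⟨Φ, hΦ⟩ := exists_sum_eigenvalues_mul_sq_eq hA hB Pᵀ.mulVecLin fun x => by
    rw [hAB, mulVecLin_apply, dotProduct_mul_mul_transpose_mulVec]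
  obtain ⟨Ψ, hΨ⟩ := exists_sum_eigenvalues_mul_sq_eq hB hA Qᵀ.mulVecLin fun y => by
    rw [hAB, mulVecLin_apply, dotProduct_mul_mul_transpose_mulVec, mulVec_mulVec,
      ← transpose_mul, hQP, transpose_one, one_mulVec]
  exact ⟨(card_pos_le_of_sum_mul_sq_eq _ _ Φ hΦ).antisymm (card_pos_le_of_sum_mul_sq_eq _ _ Ψ hΨ),
    (card_neg_le_of_sum_mul_sq_eq _ _ Φ hΦ).antisymm (card_neg_le_of_sum_mul_sq_eq _ _ Ψ hΨ)⟩

end IsHermitian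

namespace PosSemidef

variable {n : Type*} [Fintype n] [DecidableEq n] {A : Matrix n n ℝ}

theorem sqrt_mul_self (hA : A.PosSemidef) : hA.sqrt * hA.sqrt = A := by
  set U : Matrix n n ℝ := (hA.1.eigenvectorUnitary : Matrix n n ℝ)
  set D := diagonal ((RCLike.ofReal : ℝ → ℝ) ∘ (√·) ∘ hA.1.eigenvalues)
  have hUU : star U * U = 1 := Unitary.coe_star_mul_self _
  have hDD : D * D = diagonal (RCLike.ofReal ∘ hA.1.eigenvalues) := by
    rw [diagonal_mul_diagonal]
    congr 1
    funext i
    simp [Real.mul_self_sqrt (hA.eigenvalues_nonneg i)]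
  conv_rhs => rw [hA.1.spectral_theorem, Unitary.conjStarAlgAut_apply]
  calc hA.sqrt * hA.sqrt = U * (D * (star U * U) * D) * star U := by
          simp only [sqrt, U, D, Matrix.mul_assoc]
    _ = _ := by rw [hUU, Matrix.mul_one, hDD]

theorem transpose_sqrt (hA : A.PosSemidef) : hA.sqrtᵀ = hA.sqrt := by
  simp only [sqrt, star_eq_conjTranspose, conjTranspose_eq_transpose_of_trivial, transpose_mul,
    diagonal_transpose, transpose_transpose, Matrix.mul_assoc]

end PosSemidef

variable {R : Type*} {l m n : Type*} [Fintype m]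

theorem exists_mul_eq_of_col_mem_span [CommSemiring R] {A : Matrix l m R} {B : Matrix l n R}
    (h : ∀ j, B.col j ∈ Submodule.span R (Set.range A.col)) : ∃ K : Matrix m n R, A * K = B := by
  simp_rw [← range_mulVecLin, LinearMap.mem_range, mulVecLin_apply] at h
  choose k hk using h
  refine ⟨(of k)ᵀ, ?_⟩
  ext i j
  simpa [mulVec, dotProduct, mul_apply] using congrFun (hk j) i

theorem mul_fromCols_one_mul [Semiring R] [Fintype l] [DecidableEq m] {P : Matrix l m R}
    {Q : Matrix m l R} {B : Matrix l n R} {K : Matrix m n R} (hQP : Q * P = 1) (hPK : P * K = B) :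
    P * fromCols 1 (Q * B) = fromCols P B := by
  rw [mul_fromCols, Matrix.mul_one, ← hPK, ← Matrix.mul_assoc Q, hQP, Matrix.one_mul]

theorem ker_mulVecLin_transpose_mul [CommRing R] [Fintype l] [Fintype n] [DecidableEq m]
    (P : Matrix l m R) {S : Matrix m n R} {T : Matrix n m R} (hST : S * T = 1) :
    LinearMap.ker (P * S)ᵀ.mulVecLin = LinearMap.ker Pᵀ.mulVecLin := by
  ext x
  simp only [LinearMap.mem_ker, mulVecLin_apply, transpose_mul, ← mulVec_mulVec]
  refine ⟨fun h => ?_, fun h => by rw [h, mulVec_zero]⟩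
  rw [← one_mulVec (Pᵀ *ᵥ x), ← transpose_one, ← hST, transpose_mul, ← mulVec_mulVec, h,
    mulVec_zero]

theorem finrank_ker_mulVecLin_transpose_add_rank [Field R] [Fintype l] (P : Matrix l m R) :
    Module.finrank R (LinearMap.ker Pᵀ.mulVecLin) + P.rank = Fintype.card l := by
  rw [← rank_transpose, add_comm, rank, LinearMap.finrank_range_add_finrank_ker,
    Module.finrank_fintype_fun_eq_card]

end Matrix

theorem signature_laplacian_eq_signature_RWR_general
    {V F C : Type*} [Fintype V] [Fintype F] [Fintype C]
    [DecidableEq V] [DecidableEq F] [DecidableEq C]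
    (BF : Matrix V F ℝ) (BC : Matrix V C ℝ)
    (hSpan : ∀ c : C, (fun v : V => BC v c) ∈
      Submodule.span ℝ (Set.range (fun f : F => (fun v : V => BF v f))))
    (w : F ⊕ C → ℝ)
    (c : ℕ)
    (hc : c = Module.finrank ℝ (LinearMap.ker (Matrix.fromCols BF BC)ᵀ.mulVecLin))
    -- `L_e(F) = B_Fᵀ·B_F` is positive definite
    (hLe : (BFᵀ * BF).PosDef)
    -- Hermitian (symmetric) structure of the three matrices in question
    (hL : (Matrix.fromCols BF BC * Matrix.diagonal w *
      (Matrix.fromCols BF BC)ᵀ).IsHermitian)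
    (hRWR : ((Matrix.fromCols (1 : Matrix F F ℝ) ((BFᵀ * BF)⁻¹ * BFᵀ * BC)) * Matrix.diagonal w *
      (Matrix.fromCols (1 : Matrix F F ℝ) ((BFᵀ * BF)⁻¹ * BFᵀ * BC))ᵀ).IsHermitian)
    (hS : (hLe.posSemidef.sqrt *
        ((Matrix.fromCols (1 : Matrix F F ℝ) ((BFᵀ * BF)⁻¹ * BFᵀ * BC)) * Matrix.diagonal w *
          (Matrix.fromCols (1 : Matrix F F ℝ) ((BFᵀ * BF)⁻¹ * BFᵀ * BC))ᵀ) *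
        hLe.posSemidef.sqrt).IsHermitian) :
    (Finset.univ.filter fun i => 0 < hL.eigenvalues i).card =
        (Finset.univ.filter fun i => 0 < hRWR.eigenvalues i).card ∧
    (Finset.univ.filter fun i => 0 < hL.eigenvalues i).card =
        (Finset.univ.filter fun i => 0 < hS.eigenvalues i).card ∧
    (Finset.univ.filter fun i => hL.eigenvalues i < 0).card =
        (Finset.univ.filter fun i => hRWR.eigenvalues i < 0).card ∧
    (Finset.univ.filter fun i => hL.eigenvalues i < 0).card =
        (Finset.univ.filter fun i => hS.eigenvalues i < 0).card ∧
    (Finset.univ.filter fun i => hL.eigenvalues i = 0).card =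
        (Finset.univ.filter fun i => hRWR.eigenvalues i = 0).card + c := by
  set Le := BFᵀ * BF
  set M := hLe.posSemidef.sqrt
  set Q := Le⁻¹ * BFᵀ
  set R := fromCols (1 : Matrix F F ℝ) (Q * BC)
  have hLeUnit : IsUnit Le := hLe.isUnit
  have hLeInv : Le⁻¹ * Le = 1 := nonsing_inv_mul _ ((isUnit_iff_isUnit_det _).1 hLeUnit)
  have hQ : Q * BF = 1 := by rw [Matrix.mul_assoc, hLeInv]
  have hM : Le⁻¹ * M * M = 1 := by rw [Matrix.mul_assoc, hLe.posSemidef.sqrt_mul_self, hLeInv]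
  obtain ⟨K, hK⟩ := exists_mul_eq_of_col_mem_span hSpan
  have hB : fromCols BF BC = BF * R := (mul_fromCols_one_mul hQ hK).symm
  obtain ⟨hposL, hnegL⟩ := hL.inertia_eq_of_eq_mul_mul_transpose hRWR hQ (by
    rw [hB, transpose_mul]; simp only [Matrix.mul_assoc])
  obtain ⟨hposS, hnegS⟩ := hS.inertia_eq_of_eq_mul_mul_transpose hRWR hM (by
    rw [hLe.posSemidef.transpose_sqrt])
  have hrank : BF.rank = Fintype.card F := by
    rw [← rank_transpose_mul_self, rank_of_isUnit _ hLeUnit]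
  have hdim : c + Fintype.card F = Fintype.card V := by
    rw [hc, hB, ker_mulVecLin_transpose_mul BF (T := fromRows 1 0)
      (by simp [R, fromCols_mul_fromRows]), ← hrank, finrank_ker_mulVecLin_transpose_add_rank]
  have hsplitL := card_pos_add_card_neg_add_card_zero hL.eigenvalues
  have hsplitR := card_pos_add_card_neg_add_card_zero hRWR.eigenvalues
  exact ⟨hposL, hposL.trans hposS.symm, hnegL, hnegL.trans hnegS.symm, by omega⟩

/-- the signatures of `L = B·W·Bᵀ`, `R·W·Rᵀ` and
`L_e(F)^{1/2}·R·W·Rᵀ·L_e(F)^{1/2}` agree on positive and negative counts, and the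
zero-eigenvalue multiplicity of `L` exceeds that of `R·W·Rᵀ` by `c = dim null(Bᵀ)`. -/
theorem signature_laplacian_eq_signature_RWR
    {V F C : Type*} [Fintype V] [Fintype F] [Fintype C]
    [DecidableEq V] [DecidableEq F] [DecidableEq C] [Nonempty V]
    (BF : Matrix V F ℝ) (BC : Matrix V C ℝ)
    (hInc : IsIncidenceMatrix (Matrix.fromCols BF BC))
    (hInd : LinearIndependent ℝ (fun f : F => (fun v : V => BF v f)))
    (hSpan : ∀ c : C, (fun v : V => BC v c) ∈
      Submodule.span ℝ (Set.range (fun f : F => (fun v : V => BF v f))))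
    (w : F ⊕ C → ℝ)
    (c : ℕ)
    (hc : c = Module.finrank ℝ (LinearMap.ker (Matrix.fromCols BF BC)ᵀ.mulVecLin))
    -- `L_e(F) = B_Fᵀ·B_F` is positive definite
    (hLe : (BFᵀ * BF).PosDef)
    -- Hermitian (symmetric) structure of the three matrices in question
    (hL : (Matrix.fromCols BF BC * Matrix.diagonal w *
      (Matrix.fromCols BF BC)ᵀ).IsHermitian)
    (hRWR : ((Matrix.fromCols (1 : Matrix F F ℝ) ((BFᵀ * BF)⁻¹ * BFᵀ * BC)) * Matrix.diagonal w *
      (Matrix.fromCols (1 : Matrix F F ℝ) ((BFᵀ * BF)⁻¹ * BFᵀ * BC))ᵀ).IsHermitian)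
    (hS : (hLe.posSemidef.sqrt *
        ((Matrix.fromCols (1 : Matrix F F ℝ) ((BFᵀ * BF)⁻¹ * BFᵀ * BC)) * Matrix.diagonal w *
          (Matrix.fromCols (1 : Matrix F F ℝ) ((BFᵀ * BF)⁻¹ * BFᵀ * BC))ᵀ) *
        hLe.posSemidef.sqrt).IsHermitian) :
    (Finset.univ.filter fun i => 0 < hL.eigenvalues i).card =
        (Finset.univ.filter fun i => 0 < hRWR.eigenvalues i).card ∧
    (Finset.univ.filter fun i => 0 < hL.eigenvalues i).card =
        (Finset.univ.filter fun i => 0 < hS.eigenvalues i).card ∧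
    (Finset.univ.filter fun i => hL.eigenvalues i < 0).card =
        (Finset.univ.filter fun i => hRWR.eigenvalues i < 0).card ∧
    (Finset.univ.filter fun i => hL.eigenvalues i < 0).card =
        (Finset.univ.filter fun i => hS.eigenvalues i < 0).card ∧
    (Finset.univ.filter fun i => hL.eigenvalues i = 0).card =
        (Finset.univ.filter fun i => hRWR.eigenvalues i = 0).card + c :=
  signature_laplacian_eq_signature_RWR_general BF BC hSpan w c hc hLe hL hRWR hS
end

section
/- Let L = B₊·W₊·B₊ᵀ − B₋·D·B₋ᵀ be the weighted Laplacian of a signed graph on n vertices, where W₊ and D are diagonal with strictly positive entries. Let B₊ = [B_{F₊} B_{C₊}] be a spanning-forest decomposition of B₊ with cut-set matrix R₊ and left inverse B_{F₊}ᴸ = (B_{F₊}ᵀ·B_{F₊})⁻¹·B_{F₊}ᵀ, and let N₊ be an n×c₊ matrix with orthonormal columns spanning the null space of B_{F₊}ᵀ (c₊ = dim null(B₊ᵀ)). Then L is positive semidefinite if and only if the symmetric 3×3 block matrix [[D⁻¹, B₋ᵀ·(B_{F₊}ᴸ)ᵀ, B₋ᵀ·N₊],[B_{F₊}ᴸ·B₋,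 R₊·W₊·R₊ᵀ, 0],[N₊ᵀ·B₋, 0, 0]] is positive semidefinite. -/
open Matrix

/-! The rows of `B_{F₊}ᴸ` and `N₊ᵀ` stack into a matrix `K` with inverse `[B_{F₊} N₊]`:
`B_{F₊}ᴸ B_{F₊} = I`, `N₊ᵀ B_{F₊} = 0` and `N₊ᵀ N₊ = I` give `K [B_{F₊} N₊] = I`, and rank–nullity
for `B_{F₊}ᵀ` shows that `K` is square. Congruence by `K` therefore preserves positive
semidefiniteness. Since `B₊ = B_{F₊} R₊` and `K B_{F₊} = [I; 0]`, it sends `L` to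
`diag(R₊ W₊ R₊ᵀ, 0) − (K B₋) D (K B₋)ᵀ`, and the Schur complement with respect to the positive
definite block `D⁻¹` turns positive semidefiniteness of this difference into that of the
3×3 block matrix. -/

namespace Matrix

variable {m n k : Type*} [Fintype m] [Fintype n]

section CommSemiring

variable {R : Type*} [CommSemiring R]

theorem mul_eq_zero_of_range_le_ker {A : Matrix k m R} {N : Matrix m n R}
    (h : LinearMap.range N.mulVecLin ≤ LinearMap.ker A.mulVecLin) : A * N = 0 :=
  ext_iff_mulVec.mpr fun v => by
    simpa [← mulVec_mulVec] using h (LinearMap.mem_range_self N.mulVecLin v)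

theorem mul_mul_cancel_of_range_le_range [Fintype k] [DecidableEq n] {A : Matrix n m R}
    {B : Matrix m n R} {C : Matrix m k R} (hAB : A * B = 1)
    (hC : LinearMap.range C.mulVecLin ≤ LinearMap.range B.mulVecLin) : B * (A * C) = C :=
  ext_iff_mulVec.mpr fun v => by
    obtain ⟨x, hx⟩ := hC (LinearMap.mem_range_self C.mulVecLin v)
    simp only [mulVecLin_apply] at hx
    rw [← mulVec_mulVec, ← mulVec_mulVec, ← hx, mulVec_mulVec x A B, hAB, one_mulVec]

theorem mul_mul_transpose_eq_fromBlocks_of_mul_eq_fromRows_one_zero [DecidableEq n]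
    {K : Matrix (n ⊕ k) m R} {B : Matrix m n R} (hKB : K * B = fromRows 1 0)
    (M : Matrix n n R) : K * (B * M * Bᵀ) * Kᵀ = fromBlocks M 0 0 0 := by
  have hassoc : K * (B * M * Bᵀ) * Kᵀ = (K * B) * M * (K * B)ᵀ := by
    simp only [transpose_mul, Matrix.mul_assoc]
  rw [hassoc, hKB, transpose_fromRows, fromRows_mul, fromRows_mul_fromCols]
  simp

end CommSemiring

section Field

variable {𝕜 : Type*} [Field 𝕜]

theorem linearIndependent_col_of_mul_eq_one [DecidableEq n] {A : Matrix n m 𝕜}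
    {N : Matrix m n 𝕜} (h : A * N = 1) : LinearIndependent 𝕜 N.col :=
  mulVec_injective_iff.mp fun x y hxy => by
    simpa [mulVec_mulVec, h] using congrArg (A *ᵥ ·) hxy

theorem card_eq_card_add_finrank_ker_transpose {B : Matrix m n 𝕜}
    (hB : LinearIndependent 𝕜 B.col) :
    Fintype.card m = Fintype.card n + Module.finrank 𝕜 (LinearMap.ker Bᵀ.mulVecLin) := by
  have hrank : Bᵀ.rank = Fintype.card n := by
    rw [rank_transpose, rank_eq_finrank_span_cols, finrank_span_eq_card hB]
  rw [← hrank, ← Module.finrank_fintype_fun_eq_card (R := 𝕜)]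
  exact (LinearMap.finrank_range_add_finrank_ker Bᵀ.mulVecLin).symm

theorem posSemidef_sub_mul_mul_conjTranspose_iff [PartialOrder 𝕜] [StarRing 𝕜]
    [StarOrderedRing 𝕜] [DecidableEq m] {D : Matrix m m 𝕜} (hD : D.PosDef) (C : Matrix n m 𝕜)
    (M : Matrix n n 𝕜) :
    (M - C * D * Cᴴ).PosSemidef ↔ (fromBlocks D⁻¹ Cᴴ C M).PosSemidef := by
  have := hD.inv.isUnit.invertible
  have hSchur := PosDef.fromBlocks₁₁ Cᴴ M hD.inv
  rwa [conjTranspose_conjTranspose,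
    nonsing_inv_nonsing_inv D ((isUnit_iff_isUnit_det D).mp hD.isUnit), Iff.comm] at hSchur

end Field

theorem posSemidef_iff_mul_mul_conjTranspose_of_mul_eq_one {R : Type*} [CommRing R]
    [PartialOrder R] [StarRing R] [DecidableEq m] {K : Matrix n m R} {P : Matrix m n R}
    (hPK : P * K = 1) {A : Matrix m m R} : A.PosSemidef ↔ (K * A * Kᴴ).PosSemidef := by
  refine ⟨fun h => h.mul_mul_conjTranspose_same K, fun h => ?_⟩
  have hA : P * (K * A * Kᴴ) * Pᴴ = A := by
    rw [show P * (K * A * Kᴴ) * Pᴴ = (P * K) * A * (P * K)ᴴ by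
      simp only [conjTranspose_mul, Matrix.mul_assoc], hPK, conjTranspose_one, Matrix.one_mul,
      Matrix.mul_one]
  simpa [hA] using h.mul_mul_conjTranspose_same P

theorem inv_transpose_mul_self_mul_transpose_mul_self [DecidableEq n] {B : Matrix m n ℝ}
    (hB : LinearIndependent ℝ B.col) : (Bᵀ * B)⁻¹ * Bᵀ * B = 1 := by
  have hG : (Bᵀ * B).PosDef := by
    simpa [conjTranspose_eq_transpose_of_trivial] using
      PosDef.conjTranspose_mul_self B (mulVec_injective_iff.mpr hB)
  rw [Matrix.mul_assoc, nonsing_inv_mul _ hG.det_pos.ne'.isUnit]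

section ForestBasis

variable [DecidableEq n] {B : Matrix m n ℝ} {N : Matrix m k ℝ}

theorem fromRows_mul_eq_fromRows_one_zero (hB : LinearIndependent ℝ B.col) (hBN : Bᵀ * N = 0) :
    fromRows ((Bᵀ * B)⁻¹ * Bᵀ) Nᵀ * B = fromRows 1 0 := by
  rw [fromRows_mul, inv_transpose_mul_self_mul_transpose_mul_self hB, ← transpose_transpose B,
    ← transpose_mul, hBN, transpose_zero]

theorem fromCols_mul_fromRows_eq_one [Fintype k] [DecidableEq m] [DecidableEq k]
    (hB : LinearIndependent ℝ B.col) (hN : Nᵀ * N = 1) (hBN : Bᵀ * N = 0)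
    (hcard : Fintype.card m = Fintype.card n + Fintype.card k) :
    fromCols B N * fromRows ((Bᵀ * B)⁻¹ * Bᵀ) Nᵀ = 1 := by
  refine (mul_eq_one_comm_of_card_eq _ _ _ (by rw [hcard, Fintype.card_sum])).mp ?_
  rw [fromRows_mul_fromCols, inv_transpose_mul_self_mul_transpose_mul_self hB, Matrix.mul_assoc,
    hBN, Matrix.mul_zero, hN, ← transpose_transpose B, ← transpose_mul, hBN, transpose_zero,
    fromBlocks_one]

end ForestBasis

end Matrix

theorem signed_laplacian_psd_iff_forest_block_general
    {V Fp Cp Em : Type*} [Fintype V] [Fintype Fp] [Fintype Cp] [Fintype Em]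
    [DecidableEq V] [DecidableEq Fp] [DecidableEq Cp] [DecidableEq Em]
    (BFp : Matrix V Fp ℝ) (BCp : Matrix V Cp ℝ) (Bm : Matrix V Em ℝ)
    (hInd : LinearIndependent ℝ (fun f : Fp => (fun v : V => BFp v f)))
    (hSpan : ∀ c : Cp, (fun v : V => BCp v c) ∈
      Submodule.span ℝ (Set.range (fun f : Fp => (fun v : V => BFp v f))))
    (wp : Fp ⊕ Cp → ℝ)
    (d : Em → ℝ) (hd : ∀ e, 0 < d e)
    (cp : ℕ)
    (N : Matrix V (Fin cp) ℝ)
    (hN_orth : Nᵀ * N = 1)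
    (hN_span : Submodule.span ℝ (Set.range fun j : Fin cp => (fun v : V => N v j)) =
      LinearMap.ker BFpᵀ.mulVecLin) :
    (Matrix.fromCols BFp BCp * Matrix.diagonal wp * (Matrix.fromCols BFp BCp)ᵀ -
        Bm * Matrix.diagonal d * Bmᵀ).PosSemidef ↔
      (Matrix.fromBlocks
        (Matrix.diagonal d)⁻¹
        (Matrix.fromCols (Bmᵀ * (((BFpᵀ * BFp)⁻¹ * BFpᵀ)ᵀ)) (Bmᵀ * N))
        (Matrix.fromRows (((BFpᵀ * BFp)⁻¹ * BFpᵀ) * Bm) (Nᵀ * Bm))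
        (Matrix.fromBlocks
          ((Matrix.fromCols (1 : Matrix Fp Fp ℝ) ((BFpᵀ * BFp)⁻¹ * BFpᵀ * BCp)) * Matrix.diagonal wp *
            (Matrix.fromCols (1 : Matrix Fp Fp ℝ) ((BFpᵀ * BFp)⁻¹ * BFpᵀ * BCp))ᵀ)
          0 0 (0 : Matrix (Fin cp) (Fin cp) ℝ))).PosSemidef := by
  replace hInd : LinearIndependent ℝ BFp.col := hInd
  replace hN_span : LinearMap.range N.mulVecLin = LinearMap.ker BFpᵀ.mulVecLin := by
    rwa [range_mulVecLin]
  set BL := (BFpᵀ * BFp)⁻¹ * BFpᵀ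
  set R := fromCols (1 : Matrix Fp Fp ℝ) (BL * BCp)
  set K : Matrix (Fp ⊕ Fin cp) V ℝ := fromRows BL Nᵀ
  have hBN : BFpᵀ * N = 0 := mul_eq_zero_of_range_le_ker hN_span.le
  have hcard : Fintype.card V = Fintype.card Fp + Fintype.card (Fin cp) := by
    rw [card_eq_card_add_finrank_ker_transpose hInd, ← hN_span, range_mulVecLin,
      finrank_span_eq_card (linearIndependent_col_of_mul_eq_one hN_orth)]
  have hBp : fromCols BFp BCp = BFp * R := by
    rw [mul_fromCols, Matrix.mul_one, mul_mul_cancel_of_range_le_range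
      (inv_transpose_mul_self_mul_transpose_mul_self hInd)]
    rw [range_mulVecLin, range_mulVecLin, Submodule.span_le]
    rintro _ ⟨c, rfl⟩
    exact hSpan c
  have hLp : fromCols BFp BCp * diagonal wp * (fromCols BFp BCp)ᵀ =
      BFp * (R * diagonal wp * Rᵀ) * BFpᵀ := by
    simp only [hBp, transpose_mul, Matrix.mul_assoc]
  have hLm : K * (Bm * diagonal d * Bmᵀ) * Kᵀ = K * Bm * diagonal d * (K * Bm)ᴴ := by
    simp only [conjTranspose_eq_transpose_of_trivial, transpose_mul, Matrix.mul_assoc]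
  rw [posSemidef_iff_mul_mul_conjTranspose_of_mul_eq_one
      (fromCols_mul_fromRows_eq_one hInd hN_orth hBN hcard),
    conjTranspose_eq_transpose_of_trivial, Matrix.mul_sub, Matrix.sub_mul, hLp,
    mul_mul_transpose_eq_fromBlocks_of_mul_eq_fromRows_one_zero
      (fromRows_mul_eq_fromRows_one_zero hInd hBN),
    hLm, posSemidef_sub_mul_mul_conjTranspose_iff (posDef_diagonal_iff.mpr hd),
    conjTranspose_eq_transpose_of_trivial, transpose_mul, transpose_fromRows, transpose_transpose,
    mul_fromCols, fromRows_mul]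

/-- the signed Laplacian `L = B₊·W₊·B₊ᵀ − B₋·D·B₋ᵀ` is positive semidefinite
iff the 3×3 block matrix
`[[D⁻¹, B₋ᵀ·(B_{F₊}ᴸ)ᵀ, B₋ᵀ·N₊],[B_{F₊}ᴸ·B₋, R₊·W₊·R₊ᵀ, 0],[N₊ᵀ·B₋, 0, 0]]` is. -/
theorem signed_laplacian_psd_iff_forest_block
    {V Fp Cp Em : Type*} [Fintype V] [Fintype Fp] [Fintype Cp] [Fintype Em]
    [DecidableEq V] [DecidableEq Fp] [DecidableEq Cp] [DecidableEq Em] [Nonempty V]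
    (BFp : Matrix V Fp ℝ) (BCp : Matrix V Cp ℝ) (Bm : Matrix V Em ℝ)
    (hBp : IsIncidenceMatrix (Matrix.fromCols BFp BCp))
    (hBm : IsIncidenceMatrix Bm)
    (hInd : LinearIndependent ℝ (fun f : Fp => (fun v : V => BFp v f)))
    (hSpan : ∀ c : Cp, (fun v : V => BCp v c) ∈
      Submodule.span ℝ (Set.range (fun f : Fp => (fun v : V => BFp v f))))
    (wp : Fp ⊕ Cp → ℝ) (hwp : ∀ e, 0 < wp e)
    (d : Em → ℝ) (hd : ∀ e, 0 < d e)
    (cp : ℕ)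
    (hcp : cp = Module.finrank ℝ (LinearMap.ker (Matrix.fromCols BFp BCp)ᵀ.mulVecLin))
    (N : Matrix V (Fin cp) ℝ)
    (hN_orth : Nᵀ * N = 1)
    (hN_span : Submodule.span ℝ (Set.range fun j : Fin cp => (fun v : V => N v j)) =
      LinearMap.ker BFpᵀ.mulVecLin) :
    (Matrix.fromCols BFp BCp * Matrix.diagonal wp * (Matrix.fromCols BFp BCp)ᵀ -
        Bm * Matrix.diagonal d * Bmᵀ).PosSemidef ↔
      (Matrix.fromBlocks
        (Matrix.diagonal d)⁻¹
        (Matrix.fromCols (Bmᵀ * (((BFpᵀ * BFp)⁻¹ * BFpᵀ)ᵀ)) (Bmᵀ * N))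
        (Matrix.fromRows (((BFpᵀ * BFp)⁻¹ * BFpᵀ) * Bm) (Nᵀ * Bm))
        (Matrix.fromBlocks
          ((Matrix.fromCols (1 : Matrix Fp Fp ℝ) ((BFpᵀ * BFp)⁻¹ * BFpᵀ * BCp)) * Matrix.diagonal wp *
            (Matrix.fromCols (1 : Matrix Fp Fp ℝ) ((BFpᵀ * BFp)⁻¹ * BFpᵀ * BCp))ᵀ)
          0 0 (0 : Matrix (Fin cp) (Fin cp) ℝ))).PosSemidef :=
  signed_laplacian_psd_iff_forest_block_general BFp BCp Bm hInd hSpan wp d hd cp N hN_orth hN_span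
end

section
/- Let L = B₊·W₊·B₊ᵀ − B₋·D·B₋ᵀ be the weighted Laplacian of a signed graph, where W₊ and D are diagonal with strictly positive entries, and suppose the positive subgraph is connected, i.e. the null space of B₊ᵀ is spanned by the all-ones vector. Let B₊ = [B_{T₊} B_{C₊}] be a spanning-tree decomposition of B₊ with cut-set matrix R₊ and left inverse B_{T₊}ᴸ. Then L is positive semidefinite if and only if the symmetric block matrix [[D⁻¹, B₋ᵀ·(B_{T₊}ᴸ)ᵀ],[B_{T₊}ᴸ·B₋, R₊·W₊·R₊ᵀ]] is positive semidefinite. -/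
open Matrix

/-!
Write `S = R₊W₊R₊ᵀ - (B_{T₊}ᴸB₋) D (B_{T₊}ᴸB₋)ᵀ`. Since `B_{C₊} = B_{T₊}T₊`, we have
`B₊ = B_{T₊}R₊`. By connectivity `ker B_{T₊}ᵀ = ker B₊ᵀ` is spanned by the all-ones vector, to which
every column of `B₋` is orthogonal; so the columns of `B₋` lie in the range of `B_{T₊}`, on which
`B_{T₊}B_{T₊}ᴸ` is the identity. Hence `L = B_{T₊} S B_{T₊}ᵀ`, and `S = B_{T₊}ᴸ L (B_{T₊}ᴸ)ᵀ` because
`B_{T₊}ᴸB_{T₊} = I`: the two congruences show `L ⪰ 0 ↔ S ⪰ 0`. Finally `S` is the Schur complement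
of the positive definite block `D⁻¹` in the block matrix.
-/

namespace Matrix

variable {m n k : Type*} [Fintype n]

theorem exists_mul_eq_of_col_mem_span_s4 {R : Type*} [CommSemiring R] {A : Matrix m n R}
    {C : Matrix m k R} (hC : ∀ c, C.col c ∈ Submodule.span R (Set.range A.col)) :
    ∃ Y : Matrix n k R, A * Y = C := by
  choose y hy using fun c => (range_mulVecLin A ▸ hC c : C.col c ∈ LinearMap.range A.mulVecLin)
  refine ⟨(of y)ᵀ, ?_⟩
  ext i c
  simpa [mul_apply, mulVec, dotProduct] using congrFun (hy c) i

variable [Fintype m]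

theorem posSemidef_iff_of_eq_mul_mul_conjTranspose {R : Type*} [Ring R] [PartialOrder R]
    [StarRing R] [DecidableEq n] {A : Matrix m m R} {S : Matrix n n R} {M : Matrix m n R}
    {N : Matrix n m R} (hNM : N * M = 1) (hA : A = M * S * Mᴴ) :
    A.PosSemidef ↔ S.PosSemidef := by
  refine ⟨fun h => ?_, fun h => hA ▸ h.mul_mul_conjTranspose_same M⟩
  have hS : N * A * Nᴴ = S :=
    calc N * A * Nᴴ = N * M * S * (N * M)ᴴ := by simp only [hA, conjTranspose_mul, Matrix.mul_assoc]
      _ = S := by rw [hNM, conjTranspose_one, Matrix.one_mul, Matrix.mul_one]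
  exact hS ▸ h.mul_mul_conjTranspose_same N

theorem transpose_fromCols_mul_mulVec_eq_zero {R : Type*} [CommSemiring R] [Fintype k]
    {A : Matrix m n R} (Y : Matrix n k R) {z : m → R} (hz : Aᵀ *ᵥ z = 0) :
    (fromCols A (A * Y))ᵀ *ᵥ z = 0 := by
  rw [transpose_fromCols, fromRows_mulVec, transpose_mul, ← mulVec_mulVec, hz, mulVec_zero]
  ext (i | i) <;> rfl

variable [DecidableEq n]

noncomputable def leftPinv (A : Matrix m n ℝ) : Matrix n m ℝ := (Aᵀ * A)⁻¹ * Aᵀ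

theorem isUnit_det_transpose_mul_self {A : Matrix m n ℝ} (hA : LinearIndependent ℝ A.col) :
    IsUnit (Aᵀ * A).det :=
  (isUnit_iff_isUnit_det _).mp
    (PosDef.conjTranspose_mul_self A (mulVec_injective_iff.mpr hA)).isUnit

theorem leftPinv_mul_self {A : Matrix m n ℝ} (hA : LinearIndependent ℝ A.col) :
    A.leftPinv * A = 1 := by
  rw [leftPinv, Matrix.mul_assoc, nonsing_inv_mul _ (isUnit_det_transpose_mul_self hA)]

/-- The residual `Z = C - A * (A.leftPinv * C)` lies in `ker Aᵀ`, so it is orthogonal both to `C`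
and to the range of `A`; hence `ZᵀZ = 0`. -/
theorem mul_leftPinv_mul_of_forall_vecMul_eq_zero [Fintype k] {A : Matrix m n ℝ}
    (hA : LinearIndependent ℝ A.col) {C : Matrix m k ℝ}
    (hC : ∀ z, Aᵀ *ᵥ z = 0 → z ᵥ* C = 0) : A * (A.leftPinv * C) = C := by
  set Z := C - A * (A.leftPinv * C)
  have hAZ : Aᵀ * Z = 0 := by
    rw [Matrix.mul_sub, leftPinv, ← Matrix.mul_assoc, ← Matrix.mul_assoc, ← Matrix.mul_assoc,
      mul_nonsing_inv _ (isUnit_det_transpose_mul_self hA), Matrix.one_mul, sub_self]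
  have hZC : Zᵀ * C = 0 := by
    ext i j
    have hZi : Aᵀ *ᵥ Z.col i = 0 := funext fun t => by
      simpa [mul_apply, mulVec, dotProduct] using congrFun (congrFun hAZ t) i
    simpa [mul_apply, vecMul, dotProduct] using congrFun (hC _ hZi) j
  have hZZ : Zᵀ * Z = 0 := by
    rw [Matrix.mul_sub, hZC, ← Matrix.mul_assoc,
      show Zᵀ * A = (Aᵀ * Z)ᵀ by rw [transpose_mul, transpose_transpose], hAZ]
    simp
  rw [← conjTranspose_eq_transpose_of_trivial, conjTranspose_mul_self_eq_zero, sub_eq_zero] at hZZ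
  exact hZZ.symm

theorem posSemidef_fromBlocks_inv_iff {D : Matrix n n ℝ} (hD : D.PosDef)
    (C : Matrix m n ℝ) (S : Matrix m m ℝ) :
    (fromBlocks D⁻¹ Cᵀ C S).PosSemidef ↔ (S - C * D * Cᵀ).PosSemidef := by
  have := hD.inv.isUnit.invertible
  simpa [conjTranspose_eq_transpose_of_trivial, ← Matrix.mul_assoc,
    nonsing_inv_nonsing_inv _ ((isUnit_iff_isUnit_det D).mp hD.isUnit)] using
    hD.inv.fromBlocks₁₁ Cᵀ S

end Matrix

theorem IsIncidenceMatrix.one_vecMul {V E : Type*} [Fintype V] {B : Matrix V E ℝ}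
    (hB : IsIncidenceMatrix B) : (1 : V → ℝ) ᵥ* B = 0 := by
  classical
  ext e
  obtain ⟨i, j, hij, hi, hj, h0⟩ := hB e
  simp only [vecMul, dotProduct, Pi.one_apply, one_mul, Pi.zero_apply]
  rw [Fintype.sum_eq_add i j hij fun x hx => h0 x hx.1 hx.2, hi, hj, add_neg_cancel]

theorem signed_laplacian_psd_iff_tree_block_general
    {V Tp Cp Em : Type*} [Fintype V] [Fintype Tp] [Fintype Cp] [Fintype Em]
    [DecidableEq Tp] [DecidableEq Cp] [DecidableEq Em]
    (BTp : Matrix V Tp ℝ) (BCp : Matrix V Cp ℝ) (Bm : Matrix V Em ℝ)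
    (hBm : IsIncidenceMatrix Bm)
    (hInd : LinearIndependent ℝ (fun f : Tp => (fun v : V => BTp v f)))
    (hSpan : ∀ c : Cp, (fun v : V => BCp v c) ∈
      Submodule.span ℝ (Set.range (fun f : Tp => (fun v : V => BTp v f))))
    -- the positive subgraph is connected
    (hConn : LinearMap.ker (Matrix.fromCols BTp BCp)ᵀ.mulVecLin =
      Submodule.span ℝ {(fun _ : V => (1 : ℝ))})
    (wp : Tp ⊕ Cp → ℝ)
    (d : Em → ℝ) (hd : ∀ e, 0 < d e) :
    (Matrix.fromCols BTp BCp * Matrix.diagonal wp * (Matrix.fromCols BTp BCp)ᵀ -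
        Bm * Matrix.diagonal d * Bmᵀ).PosSemidef ↔
      (Matrix.fromBlocks
        (Matrix.diagonal d)⁻¹
        (Bmᵀ * (((BTpᵀ * BTp)⁻¹ * BTpᵀ)ᵀ))
        ((((BTpᵀ * BTp)⁻¹ * BTpᵀ)) * Bm)
        ((Matrix.fromCols (1 : Matrix Tp Tp ℝ) ((BTpᵀ * BTp)⁻¹ * BTpᵀ * BCp)) * Matrix.diagonal wp *
          (Matrix.fromCols (1 : Matrix Tp Tp ℝ) ((BTpᵀ * BTp)⁻¹ * BTpᵀ * BCp))ᵀ)).PosSemidef := by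
  rw [show (BTpᵀ * BTp)⁻¹ * BTpᵀ = BTp.leftPinv from rfl]
  set BL := BTp.leftPinv
  have hLB : BL * BTp = 1 := leftPinv_mul_self hInd
  obtain ⟨Y, rfl⟩ := exists_mul_eq_of_col_mem_span_s4 hSpan
  have hR : BTp * fromCols 1 (BL * (BTp * Y)) = fromCols BTp (BTp * Y) := by
    rw [mul_fromCols, Matrix.mul_one, ← Matrix.mul_assoc BL, hLB, Matrix.one_mul]
  have hBL : BTp * (BL * Bm) = Bm := by
    refine mul_leftPinv_mul_of_forall_vecMul_eq_zero hInd fun z hz => ?_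
    have hz' : z ∈ LinearMap.ker (fromCols BTp (BTp * Y))ᵀ.mulVecLin :=
      transpose_fromCols_mul_mulVec_eq_zero Y hz
    obtain ⟨a, rfl⟩ := Submodule.mem_span_singleton.mp (hConn ▸ hz')
    rw [smul_vecMul, ← Pi.one_def, hBm.one_vecMul, smul_zero]
  rw [← transpose_mul, posSemidef_fromBlocks_inv_iff (posDef_diagonal_iff.mpr hd)]
  refine posSemidef_iff_of_eq_mul_mul_conjTranspose hLB ?_
  rw [conjTranspose_eq_transpose_of_trivial, ← hR]
  conv_lhs => rw [← hBL]
  simp only [transpose_mul, Matrix.mul_sub, Matrix.sub_mul, Matrix.mul_assoc]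

/-- if the positive subgraph is connected, the signed Laplacian
`L = B₊·W₊·B₊ᵀ − B₋·D·B₋ᵀ` is positive semidefinite iff the block matrix
`[[D⁻¹, B₋ᵀ·(B_{T₊}ᴸ)ᵀ],[B_{T₊}ᴸ·B₋, R₊·W₊·R₊ᵀ]]` is. -/
theorem signed_laplacian_psd_iff_tree_block
    {V Tp Cp Em : Type*} [Fintype V] [Fintype Tp] [Fintype Cp] [Fintype Em]
    [DecidableEq V] [DecidableEq Tp] [DecidableEq Cp] [DecidableEq Em] [Nonempty V]
    (BTp : Matrix V Tp ℝ) (BCp : Matrix V Cp ℝ) (Bm : Matrix V Em ℝ)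
    (hBp : IsIncidenceMatrix (Matrix.fromCols BTp BCp))
    (hBm : IsIncidenceMatrix Bm)
    (hInd : LinearIndependent ℝ (fun f : Tp => (fun v : V => BTp v f)))
    (hSpan : ∀ c : Cp, (fun v : V => BCp v c) ∈
      Submodule.span ℝ (Set.range (fun f : Tp => (fun v : V => BTp v f))))
    -- the positive subgraph is connected
    (hConn : LinearMap.ker (Matrix.fromCols BTp BCp)ᵀ.mulVecLin =
      Submodule.span ℝ {(fun _ : V => (1 : ℝ))})
    (wp : Tp ⊕ Cp → ℝ) (hwp : ∀ e, 0 < wp e)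
    (d : Em → ℝ) (hd : ∀ e, 0 < d e) :
    (Matrix.fromCols BTp BCp * Matrix.diagonal wp * (Matrix.fromCols BTp BCp)ᵀ -
        Bm * Matrix.diagonal d * Bmᵀ).PosSemidef ↔
      (Matrix.fromBlocks
        (Matrix.diagonal d)⁻¹
        (Bmᵀ * (((BTpᵀ * BTp)⁻¹ * BTpᵀ)ᵀ))
        ((((BTpᵀ * BTp)⁻¹ * BTpᵀ)) * Bm)
        ((Matrix.fromCols (1 : Matrix Tp Tp ℝ) ((BTpᵀ * BTp)⁻¹ * BTpᵀ * BCp)) * Matrix.diagonal wp *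
          (Matrix.fromCols (1 : Matrix Tp Tp ℝ) ((BTpᵀ * BTp)⁻¹ * BTpᵀ * BCp))ᵀ)).PosSemidef :=
  signed_laplacian_psd_iff_tree_block_general BTp BCp Bm hBm hInd hSpan hConn wp d hd
end

section
/- Let L = B₊·W₊·B₊ᵀ − B₋·D·B₋ᵀ be the weighted Laplacian of a signed graph with at least one positive and at least one negative edge, where W₊ and D are diagonal with strictly positive entries. Suppose the full graph is connected, i.e. the null space of [B₊ B₋]ᵀ equals the span of the all-ones vector, but the positive subgraph is not connected, i.e. the null space of B₊ᵀ has dimension at least 2. Then L is not positive semidefinite: there exists a vector x with xᵀ·L·x < 0. This holds for every choice of the strictly positive diagonal entries of D. -/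
/-! Since `dim ker B₊ᵀ ≥ 2`, some `x ∈ ker B₊ᵀ` is not constant. The positive part of the
quadratic form vanishes at `x`, while connectivity of the full graph forces `B₋ᵀ x ≠ 0`, so
`xᵀ L x = -∑ₑ dₑ (B₋ᵀ x)ₑ² < 0`. -/

open Matrix

theorem Submodule.exists_mem_notMem_of_finrank_lt {R M : Type*} [Ring R] [StrongRankCondition R]
    [AddCommGroup M] [Module R M] {p q : Submodule R M} [Module.Finite R p]
    (h : Module.finrank R p < Module.finrank R q) : ∃ x ∈ q, x ∉ p :=
  SetLike.not_le_iff_exists.mp fun hqp => (Submodule.finrank_mono hqp).not_gt h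

namespace Matrix

variable {R V E : Type*} [CommSemiring R] [Fintype V]

theorem dotProduct_mul_diagonal_mul_transpose_mulVec [Fintype E] [DecidableEq E]
    (B : Matrix V E R) (w : E → R) (x : V → R) :
    x ⬝ᵥ (B * diagonal w * Bᵀ) *ᵥ x = ∑ e, w e * (Bᵀ *ᵥ x) e ^ 2 := by
  rw [Matrix.mul_assoc, ← mulVec_mulVec, ← mulVec_mulVec, dotProduct_mulVec,
    ← mulVec_transpose, dotProduct, Finset.sum_congr rfl]
  intro e _
  rw [mulVec_diagonal]
  ring

theorem ker_transpose_fromCols_mulVecLin {E' : Type*}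
    (A : Matrix V E R) (B : Matrix V E' R) :
    LinearMap.ker (fromCols A B)ᵀ.mulVecLin =
      LinearMap.ker Aᵀ.mulVecLin ⊓ LinearMap.ker Bᵀ.mulVecLin := by
  ext x
  simp only [Submodule.mem_inf, LinearMap.mem_ker, mulVecLin_apply, transpose_fromCols,
    fromRows_mulVec, ← Sum.elim_zero_zero, Sum.elim_eq_iff]

end Matrix

theorem negative_cut_implies_indefinite_general
    {V Ep Em : Type*} [Fintype V] [Fintype Ep] [Fintype Em]
    [DecidableEq Ep] [DecidableEq Em]
    (Bp : Matrix V Ep ℝ) (Bm : Matrix V Em ℝ)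
    -- the full graph is connected
    (hConn : LinearMap.ker (Matrix.fromCols Bp Bm)ᵀ.mulVecLin =
      Submodule.span ℝ {(fun _ : V => (1 : ℝ))})
    -- the positive subgraph is not connected
    (hNotConn : 2 ≤ Module.finrank ℝ (LinearMap.ker Bpᵀ.mulVecLin))
    (wp : Ep → ℝ) :
    ∀ d : Em → ℝ, (∀ e, 0 < d e) →
      ∃ x : V → ℝ,
        x ⬝ᵥ ((Bp * Matrix.diagonal wp * Bpᵀ - Bm * Matrix.diagonal d * Bmᵀ).mulVec x) < 0 := by
  intro d hd
  have hspan : Module.finrank ℝ (Submodule.span ℝ {(fun _ : V => (1 : ℝ))}) ≤ 1 :=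
    (finrank_span_le_card _).trans (by simp)
  obtain ⟨x, hxp, hx⟩ :=
    Submodule.exists_mem_notMem_of_finrank_lt (hspan.trans_lt hNotConn)
  have hxm : Bmᵀ *ᵥ x ≠ 0 := fun hxm => hx <| by
    rw [← hConn, ker_transpose_fromCols_mulVecLin]
    exact ⟨hxp, hxm⟩
  obtain ⟨e, he⟩ : ∃ e, (Bmᵀ *ᵥ x) e ≠ 0 := Function.ne_iff.mp hxm
  refine ⟨x, ?_⟩
  rw [sub_mulVec, dotProduct_sub, dotProduct_mul_diagonal_mul_transpose_mulVec,
    dotProduct_mul_diagonal_mul_transpose_mulVec, show Bpᵀ *ᵥ x = 0 from hxp]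
  simp only [Pi.zero_apply, ne_eq, OfNat.ofNat_ne_zero, not_false_eq_true, zero_pow, mul_zero,
    Finset.sum_const_zero, zero_sub, neg_neg_iff_pos]
  exact Finset.sum_pos' (fun i _ => by have := hd i; positivity)
    ⟨e, Finset.mem_univ e, by have := hd e; positivity⟩

/-- if the full graph is connected but the positive subgraph is not,
then the signed Laplacian is indefinite for every choice of (strictly positive)
magnitudes of the negative edge weights. -/
theorem negative_cut_implies_indefinite
    {V Ep Em : Type*} [Fintype V] [Fintype Ep] [Fintype Em]
    [DecidableEq V] [DecidableEq Ep] [DecidableEq Em] [Nonempty V]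
    [Nonempty Ep] [Nonempty Em]
    (Bp : Matrix V Ep ℝ) (Bm : Matrix V Em ℝ)
    (hBp : IsIncidenceMatrix Bp) (hBm : IsIncidenceMatrix Bm)
    -- the full graph is connected
    (hConn : LinearMap.ker (Matrix.fromCols Bp Bm)ᵀ.mulVecLin =
      Submodule.span ℝ {(fun _ : V => (1 : ℝ))})
    -- the positive subgraph is not connected
    (hNotConn : 2 ≤ Module.finrank ℝ (LinearMap.ker Bpᵀ.mulVecLin))
    (wp : Ep → ℝ) (hwp : ∀ e, 0 < wp e) :
    ∀ d : Em → ℝ, (∀ e, 0 < d e) →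
      ∃ x : V → ℝ,
        x ⬝ᵥ ((Bp * Matrix.diagonal wp * Bpᵀ - Bm * Matrix.diagonal d * Bmᵀ).mulVec x) < 0 :=
  negative_cut_implies_indefinite_general Bp Bm hConn hNotConn wp
end

section
/- Let L = B₊·W₊·B₊ᵀ − B₋·D·B₋ᵀ be the weighted Laplacian of a balanced signed graph with at least one negative edge, where W₊ and D are diagonal with strictly positive entries: there is a partition of the vertex set V into two sets V₁ and V₂ such that every negative edge (every column of B₋) has one endpoint in V₁ and the other in V₂, and every positive edge (every column of B₊) has both endpoints in the same part. Then L is not positive semidefinite: there exists a vector x with xᵀ·L·x < 0, for every choice of the strictly positive diagonal entries of D. -/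
open Matrix

lemma quadform_expand {V E : Type*} [Fintype V] [Fintype E] [DecidableEq E]
    (A : Matrix V E ℝ) (w : E → ℝ) (x : V → ℝ) :
    x ⬝ᵥ ((A * Matrix.diagonal w * Aᵀ) *ᵥ x)
      = ∑ e : E, w e * (Aᵀ *ᵥ x) e ^ 2 := by
  rw [← mulVec_mulVec, ← mulVec_mulVec, dotProduct_mulVec, ← mulVec_transpose]
  simp only [dotProduct, mulVec_diagonal]
  apply Finset.sum_congr rfl
  intro e _
  ring

lemma col_sum {V E : Type*} [Fintype V] [DecidableEq V]
    (A : Matrix V E ℝ) (hA : IsIncidenceMatrix A) (x : V → ℝ) (e : E) :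
    ∃ i j : V, i ≠ j ∧ A i e = 1 ∧ A j e = -1 ∧ (Aᵀ *ᵥ x) e = x i - x j := by
  obtain ⟨i, j, hij, hi, hj, hz⟩ := hA e
  refine ⟨i, j, hij, hi, hj, ?_⟩
  have h1 : (Aᵀ *ᵥ x) e = ∑ k : V, A k e * x k := by
    simp [mulVec, dotProduct, transpose, mul_comm]
  rw [h1, Finset.sum_eq_add i j hij
    (fun c _ hc => by rw [hz c hc.1 hc.2]; ring)
    (fun h => absurd (Finset.mem_univ i) h)
    (fun h => absurd (Finset.mem_univ j) h), hi, hj]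
  ring

/-- the Laplacian of a balanced signed graph with at least one negative edge
is indefinite for every choice of strictly positive magnitudes of the negative weights.
The partition of the vertices is encoded by a predicate `p : V → Prop` (`V₁ = {v | p v}`,
`V₂ = {v | ¬ p v}`); every negative edge joins the two parts and every positive edge
stays inside a part. -/
theorem balanced_signed_graph_laplacian_indefinite
    {V Ep Em : Type*} [Fintype V] [Fintype Ep] [Fintype Em]
    [DecidableEq V] [DecidableEq Ep] [DecidableEq Em] [Nonempty V] [Nonempty Em]
    (Bp : Matrix V Ep ℝ) (Bm : Matrix V Em ℝ)
    (hBp : IsIncidenceMatrix Bp) (hBm : IsIncidenceMatrix Bm)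
    (p : V → Prop)
    -- every negative edge has one endpoint in each part
    (hneg : ∀ e : Em, ∀ i j : V, Bm i e ≠ 0 → Bm j e ≠ 0 → i ≠ j → ¬ (p i ↔ p j))
    -- every positive edge has both endpoints in the same part
    (hpos : ∀ e : Ep, ∀ i j : V, Bp i e ≠ 0 → Bp j e ≠ 0 → (p i ↔ p j))
    (wp : Ep → ℝ) (hwp : ∀ e, 0 < wp e) :
    ∀ d : Em → ℝ, (∀ e, 0 < d e) →
      ∃ x : V → ℝ,
        x ⬝ᵥ ((Bp * Matrix.diagonal wp * Bpᵀ - Bm * Matrix.diagonal d * Bmᵀ).mulVec x) < 0 := by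
  intro d hd
  classical
  set x : V → ℝ := fun v => if p v then 1 else -1 with hx
  refine ⟨x, ?_⟩
  rw [sub_mulVec, dotProduct_sub, quadform_expand, quadform_expand]
  have hP : ∑ e : Ep, wp e * (Bpᵀ *ᵥ x) e ^ 2 = 0 := by
    apply Finset.sum_eq_zero
    intro e _
    obtain ⟨i, j, hij, hi, hj, hsum⟩ := col_sum Bp hBp x e
    have hpij : p i ↔ p j := hpos e i j (by rw [hi]; norm_num) (by rw [hj]; norm_num)
    have hxij : x i = x j := by
      simp only [hx]
      by_cases h : p i
      · rw [if_pos h, if_pos (hpij.mp h)]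
      · rw [if_neg h, if_neg (fun h' => h (hpij.mpr h'))]
    rw [hsum, hxij]
    ring
  have hN : ∀ e : Em, d e * (Bmᵀ *ᵥ x) e ^ 2 = 4 * d e := by
    intro e
    obtain ⟨i, j, hij, hi, hj, hsum⟩ := col_sum Bm hBm x e
    have hpij : ¬ (p i ↔ p j) := hneg e i j (by rw [hi]; norm_num) (by rw [hj]; norm_num) hij
    have hxij : (x i - x j) ^ 2 = 4 := by
      simp only [hx]
      by_cases h1 : p i <;> by_cases h2 : p j
      · exact absurd (iff_of_true h1 h2) hpij
      · rw [if_pos h1, if_neg h2]; norm_num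
      · rw [if_neg h1, if_pos h2]; norm_num
      · exact absurd (iff_of_false h1 h2) hpij
    rw [hsum, hxij]
    ring
  have hNsum : 0 < ∑ e : Em, d e * (Bmᵀ *ᵥ x) e ^ 2 := by
    rw [Finset.sum_congr rfl (fun e _ => hN e)]
    apply Finset.sum_pos (fun e _ => by linarith [hd e]) Finset.univ_nonempty
  rw [hP]
  linarith
end

section
/- Let B₊ be an oriented incidence matrix of a connected graph (the null space of B₊ᵀ equals the span of the all-ones vector) with diagonal weight matrix W₊ having strictly positive entries, and set L₊ = B₊·W₊·B₊ᵀ. Let u ≠ v be two vertices, let d > 0, and consider the Laplacian with one additional negative edge of weight −d between u and v: L = L₊ − d·(e_u − e_v)·(e_u − e_v)ᵀ. Let R_uv = (e_u − e_v)ᵀ·L₊†·(e_u − e_v) be the effective resistance between u and v in the positive subgraph, where L₊† is the Moore–Penrose pseudoinverse of L₊. Then L is positive semidefinite if and only if d ≤ 1 / R_uv. -/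
open Matrix

/-!
With `x = e_u - e_v`, connectivity makes `ker L₊ = span 𝟙` orthogonal to `x`, so `x` lies in the
range of `L₊` and `y = L₊† x` solves `L₊ y = x`; then `R_uv = xᵀ y = yᵀ L₊ y > 0`. For any `z`,
Cauchy–Schwarz for the semidefinite form of `L₊` gives `(xᵀ z)² = (yᵀ L₊ z)² ≤ R_uv · zᵀ L₊ z`, so
`zᵀ L z ≥ (1 - d R_uv) zᵀ L₊ z ≥ 0` when `d R_uv ≤ 1`; conversely `yᵀ L y = R_uv (1 - d R_uv)`.
-/

namespace Matrix

variable {n m : Type*} [Fintype n]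

theorem IsSymm.dotProduct_mulVec_comm {L : Matrix n n ℝ} (hL : L.IsSymm) (z w : n → ℝ) :
    w ⬝ᵥ L *ᵥ z = z ⬝ᵥ L *ᵥ w := by
  rw [dotProduct_mulVec, ← mulVec_transpose, hL.eq, dotProduct_comm]

theorem dotProduct_vecMulVec_mulVec (x z : n → ℝ) :
    z ⬝ᵥ vecMulVec x x *ᵥ z = (x ⬝ᵥ z) ^ 2 := by
  rw [vecMulVec_mulVec, op_smul_eq_smul, dotProduct_smul, smul_eq_mul, dotProduct_comm, sq]

theorem PosSemidef.dotProduct_mulVec_sq_le {L : Matrix n n ℝ} (hL : L.PosSemidef)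
    (z w : n → ℝ) :
    (z ⬝ᵥ L *ᵥ w) ^ 2 ≤ (z ⬝ᵥ L *ᵥ z) * (w ⬝ᵥ L *ᵥ w) := by
  have hsymm := (isHermitian_iff_isSymm.mp hL.isHermitian).dotProduct_mulVec_comm z w
  have hdisc := discrim_le_zero (a := w ⬝ᵥ L *ᵥ w) (b := 2 * (z ⬝ᵥ L *ᵥ w))
    (c := z ⬝ᵥ L *ᵥ z) fun t => by
      have := hL.dotProduct_mulVec_nonneg (z + t • w)
      simp only [star_trivial, mulVec_add, mulVec_smul, add_dotProduct, dotProduct_add,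
        smul_dotProduct, dotProduct_smul, smul_eq_mul, hsymm] at this
      linarith
  rw [discrim] at hdisc
  linarith

theorem PosSemidef.sub_smul_vecMulVec_posSemidef_iff {L : Matrix n n ℝ} (hL : L.PosSemidef)
    {x y : n → ℝ} (hy : L *ᵥ y = x) (hx : x ≠ 0) (d : ℝ) :
    (L - d • vecMulVec x x).PosSemidef ↔ d ≤ 1 / (x ⬝ᵥ y) := by
  have hR : x ⬝ᵥ y = y ⬝ᵥ L *ᵥ y := by rw [← hy, dotProduct_comm]
  have hRpos : 0 < x ⬝ᵥ y := by
    rw [hR]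
    refine (hL.dotProduct_mulVec_nonneg y).lt_of_ne fun h => hx ?_
    rw [← hy, ← hL.dotProduct_mulVec_zero_iff y, ← h]
  have hform (z : n → ℝ) :
      z ⬝ᵥ (L - d • vecMulVec x x) *ᵥ z = z ⬝ᵥ L *ᵥ z - d * (x ⬝ᵥ z) ^ 2 := by
    rw [sub_mulVec, dotProduct_sub, smul_mulVec, dotProduct_smul, smul_eq_mul,
      dotProduct_vecMulVec_mulVec]
  rw [le_div_iff₀ hRpos]
  constructor
  · intro h
    have := h.dotProduct_mulVec_nonneg y
    rw [star_trivial, hform, ← hR] at this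
    nlinarith
  · intro hdR
    have hherm : (L - d • vecMulVec x x).IsHermitian := by
      refine hL.isHermitian.sub (IsHermitian.smul ?_ (IsSelfAdjoint.all d))
      simpa using (posSemidef_vecMulVec_self_star x).isHermitian
    refine .of_dotProduct_mulVec_nonneg hherm fun z => ?_
    have hcs : (x ⬝ᵥ z) ^ 2 ≤ (x ⬝ᵥ y) * (z ⬝ᵥ L *ᵥ z) := by
      have := hL.dotProduct_mulVec_sq_le y z
      rwa [(isHermitian_iff_isSymm.mp hL.isHermitian).dotProduct_mulVec_comm, hy,
        dotProduct_comm z, dotProduct_comm y] at this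
    rw [star_trivial, hform]
    rcases le_or_gt d 0 with hd | hd
    · nlinarith [hL.dotProduct_mulVec_nonneg z, sq_nonneg (x ⬝ᵥ z)]
    · nlinarith [mul_le_mul_of_nonneg_left hcs hd.le, hL.dotProduct_mulVec_nonneg z]

section PseudoInverse

variable {L P : Matrix n n ℝ}

theorem mul_mul_eq_self_of_isSymm (hL : L.IsSymm) (h1 : L * P * L = L)
    (h3 : (L * P)ᵀ = L * P) : L * (L * P) = L :=
  calc L * (L * P) = Lᵀ * (L * P)ᵀ := by rw [hL.eq, h3]
    _ = L := by rw [← transpose_mul, h1, hL.eq]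

theorem mulVec_mulVec_eq_self_of_forall_ker (hL : L.IsSymm) (h1 : L * P * L = L)
    (h3 : (L * P)ᵀ = L * P) {x : n → ℝ} (hx : ∀ q, L *ᵥ q = 0 → q ⬝ᵥ x = 0) :
    L *ᵥ (P *ᵥ x) = x := by
  set q := x - L *ᵥ (P *ᵥ x)
  have hq : L *ᵥ q = 0 := by
    rw [mulVec_sub, mulVec_mulVec, mulVec_mulVec, Matrix.mul_assoc,
      mul_mul_eq_self_of_isSymm hL h1 h3, sub_self]
  have hqq : q ⬝ᵥ q = 0 :=
    calc q ⬝ᵥ q = q ⬝ᵥ x - q ⬝ᵥ L *ᵥ (P *ᵥ x) := dotProduct_sub _ _ _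
      _ = 0 := by rw [hx q hq, hL.dotProduct_mulVec_comm, hq, dotProduct_zero, sub_zero]
  exact (sub_eq_zero.mp (dotProduct_self_eq_zero.mp hqq)).symm

end PseudoInverse

variable [DecidableEq m] [Fintype m]

theorem posSemidef_mul_diagonal_mul_transpose (B : Matrix n m ℝ) {w : m → ℝ} (hw : 0 ≤ w) :
    (B * diagonal w * Bᵀ).PosSemidef := by
  simpa using (PosSemidef.diagonal hw).mul_mul_conjTranspose_same B

theorem mul_diagonal_mul_transpose_mulVec_eq_zero_iff (B : Matrix n m ℝ) {w : m → ℝ}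
    (hw : ∀ e, 0 < w e) (q : n → ℝ) :
    (B * diagonal w * Bᵀ) *ᵥ q = 0 ↔ Bᵀ *ᵥ q = 0 := by
  refine ⟨fun hq => ?_, fun hq => by rw [← mulVec_mulVec, hq, mulVec_zero]⟩
  have hform : (Bᵀ *ᵥ q) ⬝ᵥ diagonal w *ᵥ (Bᵀ *ᵥ q) = 0 := by
    rw [mulVec_mulVec, mulVec_transpose, ← dotProduct_mulVec, mulVec_mulVec,
      ← Matrix.mul_assoc, hq, dotProduct_zero]
  by_contra hne
  exact ((posDef_diagonal_iff.mpr hw).dotProduct_mulVec_pos hne).ne' (by simpa using hform)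

end Matrix

theorem single_negative_edge_psd_iff_effective_resistance_general
    {V Ep : Type*} [Fintype V] [Fintype Ep]
    [DecidableEq V] [DecidableEq Ep]
    (Bp : Matrix V Ep ℝ)
    (wp : Ep → ℝ) (hwp : ∀ e, 0 < wp e)
    -- the positive graph is connected
    (hConn : LinearMap.ker Bpᵀ.mulVecLin = Submodule.span ℝ {(fun _ : V => (1 : ℝ))})
    -- `Ld` is the Moore–Penrose pseudoinverse of `L₊ = B₊·W₊·B₊ᵀ`
    (Ld : Matrix V V ℝ)
    (hp1 : (Bp * Matrix.diagonal wp * Bpᵀ) * Ld * (Bp * Matrix.diagonal wp * Bpᵀ) =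
      Bp * Matrix.diagonal wp * Bpᵀ)
    (hp3 : ((Bp * Matrix.diagonal wp * Bpᵀ) * Ld)ᵀ = (Bp * Matrix.diagonal wp * Bpᵀ) * Ld)
    (u v : V) (huv : u ≠ v) (d : ℝ) :
    (Bp * Matrix.diagonal wp * Bpᵀ -
        d • Matrix.vecMulVec (Pi.single u 1 - Pi.single v 1)
          (Pi.single u 1 - Pi.single v 1)).PosSemidef ↔
      d ≤ 1 / ((Pi.single u 1 - Pi.single v 1) ⬝ᵥ
        Ld.mulVec (Pi.single u 1 - Pi.single v 1)) := by
  have hL := posSemidef_mul_diagonal_mul_transpose Bp fun e => (hwp e).le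
  have hx : (Pi.single u 1 - Pi.single v 1 : V → ℝ) ≠ 0 := fun h => by
    simpa [huv] using congrFun h u
  have hxker : ∀ q, (Bp * diagonal wp * Bpᵀ) *ᵥ q = 0 →
      q ⬝ᵥ (Pi.single u 1 - Pi.single v 1) = 0 := by
    intro q hq
    have hq' : q ∈ LinearMap.ker Bpᵀ.mulVecLin :=
      (mul_diagonal_mul_transpose_mulVec_eq_zero_iff Bp hwp q).mp hq
    obtain ⟨c, rfl⟩ := Submodule.mem_span_singleton.mp (hConn ▸ hq')
    simp [dotProduct_sub]
  exact hL.sub_smul_vecMulVec_posSemidef_iff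
    (mulVec_mulVec_eq_self_of_forall_ker (isHermitian_iff_isSymm.mp hL.isHermitian) hp1 hp3 hxker)
    hx d

/-- adding a single negative edge of weight `−d` between `u` and `v` to a
connected positively weighted graph keeps the Laplacian positive semidefinite iff
`d ≤ 1 / R_uv`, where `R_uv` is the effective resistance between `u` and `v`. -/
theorem single_negative_edge_psd_iff_effective_resistance
    {V Ep : Type*} [Fintype V] [Fintype Ep]
    [DecidableEq V] [DecidableEq Ep] [Nonempty V]
    (Bp : Matrix V Ep ℝ) (hBp : IsIncidenceMatrix Bp)
    (wp : Ep → ℝ) (hwp : ∀ e, 0 < wp e)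
    -- the positive graph is connected
    (hConn : LinearMap.ker Bpᵀ.mulVecLin = Submodule.span ℝ {(fun _ : V => (1 : ℝ))})
    -- `Ld` is the Moore–Penrose pseudoinverse of `L₊ = B₊·W₊·B₊ᵀ`
    (Ld : Matrix V V ℝ)
    (hp1 : (Bp * Matrix.diagonal wp * Bpᵀ) * Ld * (Bp * Matrix.diagonal wp * Bpᵀ) =
      Bp * Matrix.diagonal wp * Bpᵀ)
    (hp2 : Ld * (Bp * Matrix.diagonal wp * Bpᵀ) * Ld = Ld)
    (hp3 : ((Bp * Matrix.diagonal wp * Bpᵀ) * Ld)ᵀ = (Bp * Matrix.diagonal wp * Bpᵀ) * Ld)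
    (hp4 : (Ld * (Bp * Matrix.diagonal wp * Bpᵀ))ᵀ = Ld * (Bp * Matrix.diagonal wp * Bpᵀ))
    (u v : V) (huv : u ≠ v) (d : ℝ) (hd : 0 < d) :
    (Bp * Matrix.diagonal wp * Bpᵀ -
        d • Matrix.vecMulVec (Pi.single u 1 - Pi.single v 1)
          (Pi.single u 1 - Pi.single v 1)).PosSemidef ↔
      d ≤ 1 / ((Pi.single u 1 - Pi.single v 1) ⬝ᵥ
        Ld.mulVec (Pi.single u 1 - Pi.single v 1)) :=
  single_negative_edge_psd_iff_effective_resistance_general Bp wp hwp hConn Ld hp1 hp3 u v huv d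
end

section
/- Let B₊ be an oriented incidence matrix of a connected graph (the null space of B₊ᵀ equals the span of the all-ones vector) with diagonal weight matrix W₊ having strictly positive entries, and set L₊ = B₊·W₊·B₊ᵀ with Moore–Penrose pseudoinverse L₊†. Let B₋ be an oriented incidence matrix on the same vertex set collecting the negative edges, with D diagonal having strictly positive entries, and set L = L₊ − B₋·D·B₋ᵀ. Then L is positive semidefinite if and only if the symmetric matrix D⁻¹ − B₋ᵀ·L₊†·B₋ is positive semidefinite. -/
open Matrix

private lemma matrix_ext_mulVec {m n : Type*} [Fintype n] [DecidableEq n]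
    {M N : Matrix m n ℝ} (h : ∀ x, M *ᵥ x = N *ᵥ x) : M = N := by
  ext i j
  have := congrFun (h (Pi.single j 1)) i
  simpa using this

private lemma incidence_col_sum {V Em : Type*} [Fintype V] [Fintype Em] [DecidableEq V]
    (Bm : Matrix V Em ℝ) (hBm : IsIncidenceMatrix Bm) :
    Bmᵀ *ᵥ (fun _ => (1:ℝ)) = 0 := by
  funext e
  obtain ⟨i, j, hij, h1, h2, h0⟩ := hBm e
  have hcol : ∀ k, Bm k e = (if k = i then (1:ℝ) else 0) + (if k = j then (-1:ℝ) else 0) := by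
    intro k
    by_cases hk : k = i
    · subst hk; simp [h1, hij]
    · by_cases hk' : k = j
      · subst hk'; simp [h2, hk]
      · simp [hk, hk', h0 k hk hk']
  have h3 : (Bmᵀ *ᵥ (fun _ => (1:ℝ))) e = ∑ k, Bm k e := by
    simp [Matrix.mulVec, dotProduct, Matrix.transpose_apply]
  rw [h3]
  simp [hcol, Finset.sum_add_distrib]

private lemma lap_kernel {V Ep : Type*} [Fintype V] [Fintype Ep] [DecidableEq Ep]
    (Bp : Matrix V Ep ℝ) (wp : Ep → ℝ) (hwp : ∀ e, 0 < wp e) (v : V → ℝ)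
    (hv : (Bp * Matrix.diagonal wp * Bpᵀ) *ᵥ v = 0) : Bpᵀ *ᵥ v = 0 := by
  set u := Bpᵀ *ᵥ v with hu
  have h2 : v ⬝ᵥ ((Bp * Matrix.diagonal wp * Bpᵀ) *ᵥ v) = 0 := by rw [hv, dotProduct_zero]
  have h3 : v ⬝ᵥ ((Bp * Matrix.diagonal wp * Bpᵀ) *ᵥ v) = ∑ e, wp e * u e ^ 2 := by
    rw [← Matrix.mulVec_mulVec, ← Matrix.mulVec_mulVec, Matrix.dotProduct_mulVec,
      ← Matrix.mulVec_transpose]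
    simp only [Matrix.mulVec_diagonal, dotProduct, ← hu]
    exact Finset.sum_congr rfl fun e _ => by ring
  rw [h3] at h2
  have h4 : ∀ e ∈ Finset.univ, (0:ℝ) ≤ wp e * u e ^ 2 := fun e _ =>
    mul_nonneg (hwp e).le (sq_nonneg _)
  funext e
  have h5 := (Finset.sum_eq_zero_iff_of_nonneg h4).mp h2 e (Finset.mem_univ e)
  have h6 : u e ^ 2 = 0 := by
    rcases mul_eq_zero.mp h5 with h | h
    · exact absurd h (hwp e).ne'
    · exact h
  simpa using pow_eq_zero_iff (two_ne_zero) |>.mp h6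

private theorem aux_key1 {V Em : Type*} [Fintype V] [Fintype Em] [DecidableEq V] [DecidableEq Em]
    (A M Ld : Matrix V V ℝ) (Bm : Matrix V Em ℝ) (Dg Di S0 : Matrix Em Em ℝ)
    (hM : M = Bm * Dg * Bmᵀ) (hS0 : S0 = Bmᵀ * Ld * Bm)
    (hDgDi : Dg * Di = 1)
    (hDgT : Dgᵀ = Dg) (hMT : Mᵀ = M)
    (hBmC : Bmᵀ * (Ldᵀ * A) = Bmᵀ)
    (hABm : A * (Ld * Bm) = Bm) :
    A - M = (Bm * Dg) * (Di - S0) * (Bm * Dg)ᵀ + (1 - Ld * M)ᵀ * A * (1 - Ld * M) := by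
  have hS0T' : Bmᵀ * (Ldᵀ * Bm) = S0 := by
    calc Bmᵀ * (Ldᵀ * Bm) = Bmᵀ * (Ldᵀ * (A * (Ld * Bm))) := by rw [hABm]
      _ = (Bmᵀ * (Ldᵀ * A)) * (Ld * Bm) := by simp only [Matrix.mul_assoc]
      _ = S0 := by rw [hBmC, hS0, Matrix.mul_assoc]
  have c1 : A * (Ld * M) = M := by
    rw [hM]
    calc A * (Ld * (Bm * Dg * Bmᵀ)) = (A * (Ld * Bm)) * (Dg * Bmᵀ) := by
          simp only [Matrix.mul_assoc]
      _ = Bm * Dg * Bmᵀ := by rw [hABm, Matrix.mul_assoc]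
  have c2 : M * Ldᵀ * A = M := by
    rw [hM]
    calc Bm * Dg * Bmᵀ * Ldᵀ * A = (Bm * Dg) * (Bmᵀ * (Ldᵀ * A)) := by
          simp only [Matrix.mul_assoc]
      _ = Bm * Dg * Bmᵀ := by rw [hBmC, Matrix.mul_assoc]
  have c3 : M * Ldᵀ * (A * (Ld * M)) = M * (Ld * M) := by
    rw [c1, hM]
    calc Bm * Dg * Bmᵀ * Ldᵀ * (Bm * Dg * Bmᵀ)
        = (Bm * Dg) * (Bmᵀ * (Ldᵀ * Bm)) * (Dg * Bmᵀ) := by simp only [Matrix.mul_assoc]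
      _ = (Bm * Dg) * S0 * (Dg * Bmᵀ) := by rw [hS0T']
      _ = Bm * Dg * Bmᵀ * (Ld * (Bm * Dg * Bmᵀ)) := by rw [hS0]; simp only [Matrix.mul_assoc]
  have e1 : (Bm * Dg) * (Di - S0) * (Bm * Dg)ᵀ = M - M * (Ld * M) := by
    rw [Matrix.transpose_mul, hDgT, Matrix.mul_sub, Matrix.sub_mul]
    congr 1
    · calc Bm * Dg * Di * (Dg * Bmᵀ) = Bm * ((Dg * Di) * Dg) * Bmᵀ := by
            simp only [Matrix.mul_assoc]
        _ = M := by rw [hDgDi, Matrix.one_mul, hM]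
    · rw [hM, hS0]
      simp only [Matrix.mul_assoc]
  have e2 : (1 - Ld * M)ᵀ * A * (1 - Ld * M) = A - M - M + M * (Ld * M) := by
    rw [Matrix.transpose_sub, Matrix.transpose_one, Matrix.transpose_mul, hMT]
    simp only [Matrix.sub_mul, Matrix.mul_sub, Matrix.one_mul, Matrix.mul_one]
    rw [Matrix.mul_assoc (M * Ldᵀ) A (Ld * M), c3, c1, c2]
    abel
  rw [e1, e2]; abel

private theorem aux_key2 {V Em : Type*} [Fintype V] [Fintype Em] [DecidableEq V] [DecidableEq Em]
    (A M Ld : Matrix V V ℝ) (Bm : Matrix V Em ℝ) (Dg Di S0 : Matrix Em Em ℝ)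
    (hM : M = Bm * Dg * Bmᵀ) (hS0 : S0 = Bmᵀ * Ld * Bm)
    (hDgDi : Dg * Di = 1) (hDiDg : Di * Dg = 1)
    (hDgT : Dgᵀ = Dg) (hS0T : S0ᵀ = S0)
    (hBmC : Bmᵀ * (Ldᵀ * A) = Bmᵀ)
    (hABm : A * (Ld * Bm) = Bm) :
    Di - S0 = (Ld * Bm)ᵀ * (A - M) * (Ld * Bm) + (1 - Dg * S0)ᵀ * Di * (1 - Dg * S0) := by
  have hS0T' : Bmᵀ * (Ldᵀ * Bm) = S0 := by
    calc Bmᵀ * (Ldᵀ * Bm) = Bmᵀ * (Ldᵀ * (A * (Ld * Bm))) := by rw [hABm]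
      _ = (Bmᵀ * (Ldᵀ * A)) * (Ld * Bm) := by simp only [Matrix.mul_assoc]
      _ = S0 := by rw [hBmC, hS0, Matrix.mul_assoc]
  have f1 : (Ld * Bm)ᵀ * A * (Ld * Bm) = S0 := by
    rw [Matrix.transpose_mul]
    calc Bmᵀ * Ldᵀ * A * (Ld * Bm) = (Bmᵀ * (Ldᵀ * A)) * (Ld * Bm) := by
          simp only [Matrix.mul_assoc]
      _ = S0 := by rw [hBmC, hS0, Matrix.mul_assoc]
  have f2 : (Ld * Bm)ᵀ * M * (Ld * Bm) = S0 * (Dg * S0) := by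
    rw [Matrix.transpose_mul, hM]
    calc Bmᵀ * Ldᵀ * (Bm * Dg * Bmᵀ) * (Ld * Bm)
        = (Bmᵀ * (Ldᵀ * Bm)) * (Dg * (Bmᵀ * (Ld * Bm))) := by simp only [Matrix.mul_assoc]
      _ = S0 * (Dg * S0) := by rw [hS0T', hS0]; simp only [Matrix.mul_assoc]
  have f3 : (1 - Dg * S0)ᵀ * Di * (1 - Dg * S0) = Di - S0 - S0 + S0 * (Dg * S0) := by
    rw [Matrix.transpose_sub, Matrix.transpose_one, Matrix.transpose_mul, hS0T, hDgT]
    simp only [Matrix.sub_mul, Matrix.mul_sub, Matrix.one_mul, Matrix.mul_one]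
    have g1 : Di * (Dg * S0) = S0 := by rw [← Matrix.mul_assoc, hDiDg, Matrix.one_mul]
    have g2 : S0 * Dg * Di = S0 := by rw [Matrix.mul_assoc, hDgDi, Matrix.mul_one]
    have g3 : S0 * Dg * Di * (Dg * S0) = S0 * (Dg * S0) := by rw [g2]
    rw [g1, g3, g2]
    abel
  have f4 : (Ld * Bm)ᵀ * (A - M) * (Ld * Bm) = S0 - S0 * (Dg * S0) := by
    rw [Matrix.mul_sub, Matrix.sub_mul, f1, f2]
  rw [f3, f4]; abel

/-- with `L₊` the Laplacian of a connected positively weighted graph and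
`L = L₊ − B₋·D·B₋ᵀ`, the matrix `L` is positive semidefinite iff
`D⁻¹ − B₋ᵀ·L₊†·B₋` is positive semidefinite. -/
theorem signed_laplacian_psd_iff_schur_pseudoinverse
    {V Ep Em : Type*} [Fintype V] [Fintype Ep] [Fintype Em]
    [DecidableEq V] [DecidableEq Ep] [DecidableEq Em] [Nonempty V]
    (Bp : Matrix V Ep ℝ) (Bm : Matrix V Em ℝ)
    (hBp : IsIncidenceMatrix Bp) (hBm : IsIncidenceMatrix Bm)
    (wp : Ep → ℝ) (hwp : ∀ e, 0 < wp e)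
    (d : Em → ℝ) (hd : ∀ e, 0 < d e)
    -- the positive graph is connected
    (hConn : LinearMap.ker Bpᵀ.mulVecLin = Submodule.span ℝ {(fun _ : V => (1 : ℝ))})
    -- `Ld` is the Moore–Penrose pseudoinverse of `L₊ = B₊·W₊·B₊ᵀ`
    (Ld : Matrix V V ℝ)
    (hp1 : (Bp * Matrix.diagonal wp * Bpᵀ) * Ld * (Bp * Matrix.diagonal wp * Bpᵀ) =
      Bp * Matrix.diagonal wp * Bpᵀ)
    (hp2 : Ld * (Bp * Matrix.diagonal wp * Bpᵀ) * Ld = Ld)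
    (hp3 : ((Bp * Matrix.diagonal wp * Bpᵀ) * Ld)ᵀ = (Bp * Matrix.diagonal wp * Bpᵀ) * Ld)
    (hp4 : (Ld * (Bp * Matrix.diagonal wp * Bpᵀ))ᵀ = Ld * (Bp * Matrix.diagonal wp * Bpᵀ)) :
    (Bp * Matrix.diagonal wp * Bpᵀ - Bm * Matrix.diagonal d * Bmᵀ).PosSemidef ↔
      ((Matrix.diagonal d)⁻¹ - Bmᵀ * Ld * Bm).PosSemidef := by
  -- concrete facts before abstraction
  have hdinv : ∀ e, d e * (d e)⁻¹ = 1 := fun e => mul_inv_cancel₀ (hd e).ne'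
  have hDiEq : (Matrix.diagonal d)⁻¹ = Matrix.diagonal (fun e => (d e)⁻¹) := by
    apply Matrix.inv_eq_right_inv
    rw [Matrix.diagonal_mul_diagonal]
    convert Matrix.diagonal_one using 2
    exact funext fun e => hdinv e
  have hAT : (Bp * Matrix.diagonal wp * Bpᵀ)ᵀ = Bp * Matrix.diagonal wp * Bpᵀ := by
    rw [Matrix.transpose_mul, Matrix.transpose_mul, Matrix.transpose_transpose,
      Matrix.diagonal_transpose, Matrix.mul_assoc]
  have hApsd : (Bp * Matrix.diagonal wp * Bpᵀ).PosSemidef := by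
    have hW : (Matrix.diagonal wp).PosSemidef :=
      Matrix.posSemidef_diagonal_iff.mpr fun e => (hwp e).le
    have := hW.mul_mul_conjTranspose_same Bp
    rwa [Matrix.conjTranspose_eq_transpose_of_trivial] at this
  have hker : ∀ v : V → ℝ, (Bp * Matrix.diagonal wp * Bpᵀ) *ᵥ v = 0 → Bmᵀ *ᵥ v = 0 := by
    intro v hv
    have h1 : Bpᵀ *ᵥ v = 0 := lap_kernel Bp wp hwp v hv
    have h2 : v ∈ LinearMap.ker Bpᵀ.mulVecLin := by
      rw [LinearMap.mem_ker, Matrix.mulVecLin_apply]; exact h1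
    rw [hConn, Submodule.mem_span_singleton] at h2
    obtain ⟨c, hc⟩ := h2
    rw [← hc, Matrix.mulVec_smul, incidence_col_sum Bm hBm, smul_zero]
  rw [hDiEq]
  -- abstract the four matrices
  obtain ⟨A, hAdef⟩ : ∃ A, Bp * Matrix.diagonal wp * Bpᵀ = A := ⟨_, rfl⟩
  obtain ⟨Dg, hDgdef⟩ : ∃ Dg, Matrix.diagonal d = Dg := ⟨_, rfl⟩
  obtain ⟨Di, hDidef⟩ : ∃ Di, Matrix.diagonal (fun e => (d e)⁻¹) = Di := ⟨_, rfl⟩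
  rw [hAdef] at hp1 hp2 hp3 hp4 hAT hApsd hker ⊢
  rw [hDgdef]
  rw [hDidef]
  have hDgDi : Dg * Di = 1 := by
    rw [← hDgdef, ← hDidef, Matrix.diagonal_mul_diagonal]
    convert Matrix.diagonal_one using 2
    exact funext fun e => hdinv e
  have hDiDg : Di * Dg = 1 := by
    rw [← hDgdef, ← hDidef, Matrix.diagonal_mul_diagonal]
    convert Matrix.diagonal_one using 2
    exact funext fun e => inv_mul_cancel₀ (hd e).ne'
  have hDgT : Dgᵀ = Dg := by rw [← hDgdef, Matrix.diagonal_transpose]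
  have hDipsd : Di.PosSemidef := by
    rw [← hDidef]
    exact Matrix.posSemidef_diagonal_iff.mpr fun e => (inv_pos.mpr (hd e)).le
  -- derived facts
  have hALdTA : A * Ldᵀ * A = A := by
    have h := congrArg Matrix.transpose hp1
    rw [Matrix.transpose_mul, Matrix.transpose_mul, hAT] at h
    rw [Matrix.mul_assoc]
    exact h
  have hBmC : Bmᵀ * (Ldᵀ * A) = Bmᵀ := by
    apply matrix_ext_mulVec
    intro x
    have hz : A *ᵥ ((1 - Ldᵀ * A) *ᵥ x) = 0 := by
      rw [Matrix.mulVec_mulVec, Matrix.mul_sub, Matrix.mul_one, ← Matrix.mul_assoc, hALdTA,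
        sub_self, Matrix.zero_mulVec]
    have hz2 := hker _ hz
    rw [Matrix.mulVec_mulVec, Matrix.mul_sub, Matrix.mul_one, Matrix.sub_mulVec] at hz2
    have hz3 := sub_eq_zero.mp hz2
    exact hz3.symm
  have hABm : A * (Ld * Bm) = Bm := by
    have h := congrArg Matrix.transpose hBmC
    rw [Matrix.transpose_mul, Matrix.transpose_mul, Matrix.transpose_transpose,
      Matrix.transpose_transpose, hAT] at h
    rw [← Matrix.mul_assoc]
    exact h
  have hMT : (Bm * Dg * Bmᵀ)ᵀ = Bm * Dg * Bmᵀ := by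
    rw [Matrix.transpose_mul, Matrix.transpose_mul, Matrix.transpose_transpose,
      hDgT, Matrix.mul_assoc]
  have hS0T' : Bmᵀ * (Ldᵀ * Bm) = Bmᵀ * Ld * Bm := by
    calc Bmᵀ * (Ldᵀ * Bm) = Bmᵀ * (Ldᵀ * (A * (Ld * Bm))) := by rw [hABm]
      _ = (Bmᵀ * (Ldᵀ * A)) * (Ld * Bm) := by simp only [Matrix.mul_assoc]
      _ = Bmᵀ * Ld * Bm := by rw [hBmC, Matrix.mul_assoc]
  have hS0T : (Bmᵀ * Ld * Bm)ᵀ = Bmᵀ * Ld * Bm := by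
    rw [Matrix.transpose_mul, Matrix.transpose_mul, Matrix.transpose_transpose,
      ← Matrix.mul_assoc]
    rw [Matrix.mul_assoc Bmᵀ Ldᵀ Bm] at *
    rw [← hS0T']
  have key1 := aux_key1 A (Bm * Dg * Bmᵀ) Ld Bm Dg Di (Bmᵀ * Ld * Bm)
    rfl rfl hDgDi hDgT hMT hBmC hABm
  have key2 := aux_key2 A (Bm * Dg * Bmᵀ) Ld Bm Dg Di (Bmᵀ * Ld * Bm)
    rfl rfl hDgDi hDiDg hDgT hS0T hBmC hABm
  constructor
  · intro hL
    rw [key2]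
    apply Matrix.PosSemidef.add
    · have h := hL.conjTranspose_mul_mul_same (Ld * Bm)
      rwa [Matrix.conjTranspose_eq_transpose_of_trivial] at h
    · have h := hDipsd.conjTranspose_mul_mul_same (1 - Dg * (Bmᵀ * Ld * Bm))
      rwa [Matrix.conjTranspose_eq_transpose_of_trivial] at h
  · intro hS
    rw [key1]
    apply Matrix.PosSemidef.add
    · have h := hS.mul_mul_conjTranspose_same (Bm * Dg)
      rwa [Matrix.conjTranspose_eq_transpose_of_trivial] at h
    · have h := hApsd.conjTranspose_mul_mul_same (1 - Ld * (Bm * Dg * Bmᵀ))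
      rwa [Matrix.conjTranspose_eq_transpose_of_trivial] at h
end

section
/- Let B be an oriented incidence matrix of a connected graph with diagonal weight matrix W having strictly positive entries, set L = B·W·Bᵀ with Moore–Penrose pseudoinverse L†, and let B_Δ be the submatrix of B consisting of the columns indexed by a nonempty subset E_Δ of the edges. Define M = B_Δᵀ·L†·B_Δ. Then M is positive semidefinite; for each edge k ∈ E_Δ with endpoints u_k and v_k, the diagonal entry M_kk equals the effective resistance R_{u_k v_k} = (e_{u_k} − e_{v_k})ᵀ·L†·(e_{u_k} − e_{v_k}); and consequently max_{k ∈ E_Δ} R_{u_k v_k} ≤ σ̄(M) ≤ trace(M) = Σ_{k ∈ E_Δ} R_{u_k v_k}, where σ̄(M) is the largest singular value (ℓ²→ℓ² operator norm) of M. -/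
/-!
`L = B W Bᵀ` is positive semidefinite. Penrose's four equations determine `L†` uniquely and are
invariant under transposition, so `L†` of the symmetric `L` is symmetric; then
`L† = L†ᵀ L L†` is positive semidefinite, and hence so is `M = B_Δᵀ L† B_Δ`. Column `k` of `B` is
`e_u - e_v`, which gives the diagonal of `M`. Every entry of a matrix is bounded by its operator
norm, and the operator norm of a positive semidefinite matrix is its largest eigenvalue, which is
at most the sum of its (nonnegative) eigenvalues, i.e. the trace.
-/

open Matrix

structure IsMoorePenroseInverse {R : Type*} [Mul R] [Star R] (a x : R) : Prop where
  mul_inv_mul : a * x * a = a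
  inv_mul_inv : x * a * x = x
  isSelfAdjoint_mul_inv : IsSelfAdjoint (a * x)
  isSelfAdjoint_inv_mul : IsSelfAdjoint (x * a)

namespace IsMoorePenroseInverse

variable {R : Type*}

section StarMonoid

variable [Monoid R] [StarMul R] {a x y : R}

theorem mul_inv_eq (hx : IsMoorePenroseInverse a x) (hy : IsMoorePenroseInverse a y) :
    a * x = a * y :=
  calc a * x = star (a * y) * star (a * x) := by
        rw [hx.isSelfAdjoint_mul_inv.star_eq, hy.isSelfAdjoint_mul_inv.star_eq,
          ← mul_assoc (a * y) a x, hy.mul_inv_mul]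
    _ = a * y := by
        rw [← star_mul, ← mul_assoc, hx.mul_inv_mul, hy.isSelfAdjoint_mul_inv.star_eq]

theorem inv_mul_eq (hx : IsMoorePenroseInverse a x) (hy : IsMoorePenroseInverse a y) :
    x * a = y * a :=
  calc x * a = star (x * a) * star (y * a) := by
        rw [hx.isSelfAdjoint_inv_mul.star_eq, hy.isSelfAdjoint_inv_mul.star_eq, mul_assoc,
          ← mul_assoc a y a, hy.mul_inv_mul]
    _ = y * a := by
        rw [← star_mul, mul_assoc y a, ← mul_assoc a x a, hx.mul_inv_mul,
          hy.isSelfAdjoint_inv_mul.star_eq]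

theorem unique (hx : IsMoorePenroseInverse a x) (hy : IsMoorePenroseInverse a y) : x = y :=
  calc x = x * a * x := hx.inv_mul_inv.symm
    _ = y * a * y := by rw [mul_assoc, hx.mul_inv_eq hy, ← mul_assoc, hx.inv_mul_eq hy]
    _ = y := hy.inv_mul_inv

theorem star (h : IsMoorePenroseInverse a x) :
    IsMoorePenroseInverse (star a) (star x) where
  mul_inv_mul := by rw [← star_mul, ← star_mul, ← mul_assoc, h.mul_inv_mul]
  inv_mul_inv := by rw [← star_mul, ← star_mul, ← mul_assoc, h.inv_mul_inv]
  isSelfAdjoint_mul_inv := by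
    rw [← star_mul, IsSelfAdjoint.star_iff]; exact h.isSelfAdjoint_inv_mul
  isSelfAdjoint_inv_mul := by
    rw [← star_mul, IsSelfAdjoint.star_iff]; exact h.isSelfAdjoint_mul_inv

theorem isSelfAdjoint (ha : IsSelfAdjoint a) (h : IsMoorePenroseInverse a x) :
    IsSelfAdjoint x :=
  (ha.star_eq ▸ h.star).unique h

end StarMonoid

theorem nonneg [Semiring R] [PartialOrder R] [StarRing R] [StarOrderedRing R] {a x : R}
    (ha : 0 ≤ a) (h : IsMoorePenroseInverse a x) : 0 ≤ x := by
  have hx : IsSelfAdjoint x := h.isSelfAdjoint (.of_nonneg ha)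
  have := star_left_conjugate_nonneg ha x
  rwa [hx.star_eq, h.inv_mul_inv] at this

end IsMoorePenroseInverse

theorem IsIncidenceMatrix.transpose_apply_eq {V E : Type*} [DecidableEq V] {B : Matrix V E ℝ}
    (hB : IsIncidenceMatrix B) {e : E} {u v : V} (hu : B u e = 1) (hv : B v e = -1) :
    Bᵀ e = Pi.single u 1 - Pi.single v 1 := by
  obtain ⟨i, j, hij, hi, hj, hzero⟩ := hB e
  obtain rfl : u = i := by
    by_contra hui
    by_cases huj : u = j
    · subst huj; linarith
    · linarith [hzero u hui huj]
  obtain rfl : v = j := by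
    by_contra hvj
    by_cases hvu : v = u
    · subst hvu; linarith
    · linarith [hzero v hvu hvj]
  ext a
  by_cases hau : a = u <;> by_cases hav : a = v <;> simp_all

namespace Matrix

open scoped ComplexOrder

theorem PosSemidef.of_isMoorePenroseInverse {𝕜 n : Type*} [RCLike 𝕜] [Fintype n]
    [DecidableEq n] {A X : Matrix n n 𝕜} (hA : A.PosSemidef) (h : IsMoorePenroseInverse A X) :
    X.PosSemidef := by
  open scoped MatrixOrder in
  exact nonneg_iff_posSemidef.mp (h.nonneg (nonneg_iff_posSemidef.mpr hA))

theorem mul_mul_apply_eq_dotProduct_mulVec {l m n o α : Type*} [Fintype m] [Fintype n]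
    [CommSemiring α] (A : Matrix l m α) (X : Matrix m n α) (C : Matrix n o α) (i : l) (j : o) :
    (A * X * C) i j = A i ⬝ᵥ X *ᵥ Cᵀ j := by
  rw [Matrix.mul_assoc]; rfl

open scoped Matrix.Norms.L2Operator

theorem norm_entry_le_l2_opNorm {𝕜 m n : Type*} [RCLike 𝕜] [Fintype m] [Fintype n]
    [DecidableEq n] (A : Matrix m n 𝕜) (i : m) (j : n) : ‖A i j‖ ≤ ‖A‖ :=
  calc ‖A i j‖ ≤ ‖WithLp.toLp 2 (A.col j)‖ := by
        simpa using PiLp.norm_apply_le (WithLp.toLp 2 (A.col j)) i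
    _ ≤ ‖A‖ := by simpa using A.l2_opNorm_mulVec (EuclideanSpace.single j 1)

theorem PosSemidef.l2_opNorm_le_trace {n : Type*} [Fintype n] [DecidableEq n]
    {A : Matrix n n ℝ} (hA : A.PosSemidef) : ‖A‖ ≤ A.trace := by
  set hH := hA.isHermitian
  have hev : ∀ i, 0 ≤ hH.eigenvalues i := hA.eigenvalues_nonneg
  calc ‖A‖ = ‖cfc (fun x : ℝ => x) A‖ := by rw [cfc_id' ℝ A hH.isSelfAdjoint]
    _ ≤ ∑ i, hH.eigenvalues i := by
        refine norm_cfc_le (Finset.sum_nonneg fun i _ => hev i) ?_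
        rw [hH.spectrum_real_eq_range_eigenvalues]
        rintro - ⟨i, rfl⟩
        rw [Real.norm_of_nonneg (hev i)]
        exact Finset.single_le_sum (fun j _ => hev j) (Finset.mem_univ i)
    _ = A.trace := by simp [hH.trace_eq_sum_eigenvalues]

end Matrix

theorem resistance_bounds_on_M_general
    {V E Δ : Type*} [Fintype V] [Fintype E] [Fintype Δ]
    [DecidableEq V] [DecidableEq E] [DecidableEq Δ]
    (B : Matrix V E ℝ) (hB : IsIncidenceMatrix B)
    (w : E → ℝ) (hw : ∀ e, 0 < w e)
    -- `Ld` is the Moore–Penrose pseudoinverse of `L = B·W·Bᵀ`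
    (Ld : Matrix V V ℝ)
    (hp1 : (B * Matrix.diagonal w * Bᵀ) * Ld * (B * Matrix.diagonal w * Bᵀ) =
      B * Matrix.diagonal w * Bᵀ)
    (hp2 : Ld * (B * Matrix.diagonal w * Bᵀ) * Ld = Ld)
    (hp3 : ((B * Matrix.diagonal w * Bᵀ) * Ld)ᵀ = (B * Matrix.diagonal w * Bᵀ) * Ld)
    (hp4 : (Ld * (B * Matrix.diagonal w * Bᵀ))ᵀ = Ld * (B * Matrix.diagonal w * Bᵀ))
    -- the subset of edges, selected by an injective index map
    (ι : Δ → E) :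
    let BΔ : Matrix V Δ ℝ := Matrix.of fun v k => B v (ι k)
    let M : Matrix Δ Δ ℝ := BΔᵀ * Ld * BΔ
    M.PosSemidef ∧
    (∀ k : Δ, ∀ u v : V, B u (ι k) = 1 → B v (ι k) = -1 →
      M k k = (Pi.single u 1 - Pi.single v 1) ⬝ᵥ Ld.mulVec (Pi.single u 1 - Pi.single v 1)) ∧
    (∀ k : Δ, M k k ≤ ‖Matrix.toEuclideanCLM (𝕜 := ℝ) M‖) ∧
    ‖Matrix.toEuclideanCLM (𝕜 := ℝ) M‖ ≤ M.trace := by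
  intro BΔ M
  have hL : (B * diagonal w * Bᵀ).PosSemidef := by
    simpa using (posSemidef_diagonal_iff.mpr fun e => (hw e).le).mul_mul_conjTranspose_same B
  have hpinv : IsMoorePenroseInverse (B * diagonal w * Bᵀ) Ld := by
    refine ⟨hp1, hp2, ?_, ?_⟩ <;>
      rwa [IsSelfAdjoint, star_eq_conjTranspose, conjTranspose_eq_transpose_of_trivial]
  have hM : M.PosSemidef := by
    simpa using (hL.of_isMoorePenroseInverse hpinv).conjTranspose_mul_mul_same BΔ
  refine ⟨hM, fun k u v hu hv => ?_, fun k => ?_, hM.l2_opNorm_le_trace⟩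
  · change (BΔᵀ * Ld * BΔ) k k = _
    rw [mul_mul_apply_eq_dotProduct_mulVec, ← hB.transpose_apply_eq hu hv]
    rfl
  · exact (Real.le_norm_self _).trans (norm_entry_le_l2_opNorm M k k)

/-- for `M = B_Δᵀ·L†·B_Δ` (columns of `B` selected by an injective map
`ι : Δ → E`, `Δ` nonempty), `M` is positive semidefinite, its diagonal entries are the
effective resistances between the endpoints of the selected edges, and
`max_k R_k ≤ σ̄(M) ≤ trace M = Σ_k R_k`. -/
theorem resistance_bounds_on_M
    {V E Δ : Type*} [Fintype V] [Fintype E] [Fintype Δ]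
    [DecidableEq V] [DecidableEq E] [DecidableEq Δ] [Nonempty V] [Nonempty Δ]
    (B : Matrix V E ℝ) (hB : IsIncidenceMatrix B)
    (w : E → ℝ) (hw : ∀ e, 0 < w e)
    -- the graph is connected
    (hConn : LinearMap.ker Bᵀ.mulVecLin = Submodule.span ℝ {(fun _ : V => (1 : ℝ))})
    -- `Ld` is the Moore–Penrose pseudoinverse of `L = B·W·Bᵀ`
    (Ld : Matrix V V ℝ)
    (hp1 : (B * Matrix.diagonal w * Bᵀ) * Ld * (B * Matrix.diagonal w * Bᵀ) =
      B * Matrix.diagonal w * Bᵀ)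
    (hp2 : Ld * (B * Matrix.diagonal w * Bᵀ) * Ld = Ld)
    (hp3 : ((B * Matrix.diagonal w * Bᵀ) * Ld)ᵀ = (B * Matrix.diagonal w * Bᵀ) * Ld)
    (hp4 : (Ld * (B * Matrix.diagonal w * Bᵀ))ᵀ = Ld * (B * Matrix.diagonal w * Bᵀ))
    -- the subset of edges, selected by an injective index map
    (ι : Δ → E) (hι : Function.Injective ι) :
    let BΔ : Matrix V Δ ℝ := Matrix.of fun v k => B v (ι k)
    let M : Matrix Δ Δ ℝ := BΔᵀ * Ld * BΔ
    M.PosSemidef ∧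
    (∀ k : Δ, ∀ u v : V, B u (ι k) = 1 → B v (ι k) = -1 →
      M k k = (Pi.single u 1 - Pi.single v 1) ⬝ᵥ Ld.mulVec (Pi.single u 1 - Pi.single v 1)) ∧
    (∀ k : Δ, M k k ≤ ‖Matrix.toEuclideanCLM (𝕜 := ℝ) M‖) ∧
    ‖Matrix.toEuclideanCLM (𝕜 := ℝ) M‖ ≤ M.trace :=
  resistance_bounds_on_M_general B hB w hw Ld hp1 hp2 hp3 hp4 ι
end

section
/- Let B be an oriented incidence matrix of a connected graph with diagonal weight matrix W having strictly positive entries, set L = B·W·Bᵀ with Moore–Penrose pseudoinverse L†, and for each edge k with endpoints u_k, v_k let R_k = (e_{u_k} − e_{v_k})ᵀ·L†·(e_{u_k} − e_{v_k}) be its effective resistance. Then for every edge i and every δ ∈ ℝ with |δ| < (max_k R_k)⁻¹, the perturbed Laplacian L + δ·(e_{u_i} − e_{v_i})·(e_{u_i} − e_{v_i})ᵀ is positive semidefinite. -/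
/-!
Put `b = e_u - e_v`. By the incidence structure `b` is the `i`-th column of `B`, and since `W` is
positive definite, `L = B W Bᵀ` has the same range as `B`; so `y = L† b` solves `L y = b`, and
`R_i = bᵀ y = yᵀ L y`. Cauchy–Schwarz for the semi-inner product `xᵀ L y` then gives
`(bᵀ x)² = (xᵀ L y)² ≤ R_i · xᵀ L x`, hence
`xᵀ (L + δ b bᵀ) x ≥ (1 - |δ| · max_k R_k) · xᵀ L x ≥ 0`.
-/

open Matrix

namespace Matrix

variable {m n : Type*} [Fintype n]

lemma PosSemidef.sq_dotProduct_mulVec_le {L : Matrix n n ℝ} (hL : L.PosSemidef)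
    (x y : n → ℝ) :
    (x ⬝ᵥ L *ᵥ y) ^ 2 ≤ (x ⬝ᵥ L *ᵥ x) * (y ⬝ᵥ L *ᵥ y) := by
  have hsymm : y ⬝ᵥ L *ᵥ x = x ⬝ᵥ L *ᵥ y := by
    rw [dotProduct_mulVec, ← mulVec_transpose, dotProduct_comm,
      ← conjTranspose_eq_transpose_of_trivial, hL.isHermitian.eq]
  have hdisc : discrim (y ⬝ᵥ L *ᵥ y) (2 * (x ⬝ᵥ L *ᵥ y)) (x ⬝ᵥ L *ᵥ x) ≤ 0 := by
    refine discrim_le_zero fun t => ?_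
    have hquad := hL.dotProduct_mulVec_nonneg (x + t • y)
    simp only [star_trivial, mulVec_add, mulVec_smul, dotProduct_add, add_dotProduct,
      dotProduct_smul, smul_dotProduct, hsymm, smul_eq_mul] at hquad
    linarith
  rw [discrim] at hdisc
  linarith

lemma PosSemidef.sq_dotProduct_le_of_mulVec_eq {L : Matrix n n ℝ} (hL : L.PosSemidef)
    {b y : n → ℝ} (hy : L *ᵥ y = b) (x : n → ℝ) :
    (b ⬝ᵥ x) ^ 2 ≤ (b ⬝ᵥ y) * (x ⬝ᵥ L *ᵥ x) := by
  have hbx : b ⬝ᵥ x = x ⬝ᵥ L *ᵥ y := by rw [hy, dotProduct_comm]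
  have hby : b ⬝ᵥ y = y ⬝ᵥ L *ᵥ y := by rw [hy, dotProduct_comm]
  rw [hbx, hby, mul_comm]
  exact hL.sq_dotProduct_mulVec_le x y

lemma PosSemidef.add_smul_vecMulVec_self_of_sq_dotProduct_le {L : Matrix n n ℝ}
    (hL : L.PosSemidef) {b : n → ℝ} {r δ : ℝ} (hb : ∀ x, (b ⬝ᵥ x) ^ 2 ≤ r * (x ⬝ᵥ L *ᵥ x))
    (hδ : |δ| * r ≤ 1) :
    (L + δ • vecMulVec b b).PosSemidef := by
  have hbb : (vecMulVec b b).IsHermitian := by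
    simpa using (posSemidef_vecMulVec_self_star b).isHermitian
  refine .of_dotProduct_mulVec_nonneg (hL.isHermitian.add (hbb.smul (.all δ))) fun x => ?_
  have hq : 0 ≤ x ⬝ᵥ L *ᵥ x := by simpa using hL.dotProduct_mulVec_nonneg x
  have hrank1 : x ⬝ᵥ vecMulVec b b *ᵥ x = (b ⬝ᵥ x) ^ 2 := by
    rw [vecMulVec_mulVec, op_smul_eq_smul, dotProduct_smul, smul_eq_mul, dotProduct_comm, sq]
  rw [star_trivial, add_mulVec, dotProduct_add, smul_mulVec, dotProduct_smul, hrank1, smul_eq_mul]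
  have hbx := hb x
  nlinarith [abs_nonneg δ, neg_abs_le δ, sq_nonneg (b ⬝ᵥ x)]

variable [DecidableEq n]

lemma mul_diagonal_mul_transpose_eq_zero {M : Matrix m n ℝ} {w : n → ℝ} (hw : ∀ e, 0 < w e)
    (h : M * diagonal w * Mᵀ = 0) : M = 0 := by
  ext k e
  have hkk : ∑ e, w e * M k e ^ 2 = 0 := by
    have := congrFun (congrFun h k) k
    rw [mul_apply] at this
    simp only [mul_diagonal, transpose_apply, zero_apply] at this
    rw [← this]
    exact Finset.sum_congr rfl fun e _ => by ring
  have hterm := (Finset.sum_eq_zero_iff_of_nonneg fun e _ =>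
    mul_nonneg (hw e).le (sq_nonneg (M k e))).mp hkk e (Finset.mem_univ e)
  simpa [(hw e).ne'] using hterm

lemma mul_diagonal_mul_transpose_mul_mul_eq_self [Fintype m] {A : Matrix m n ℝ} {w : n → ℝ}
    (hw : ∀ e, 0 < w e) {G : Matrix m m ℝ}
    (hG : A * diagonal w * Aᵀ * G * (A * diagonal w * Aᵀ) = A * diagonal w * Aᵀ) :
    A * diagonal w * Aᵀ * G * A = A := by
  classical
  set L := A * diagonal w * Aᵀ
  have hP : (1 - L * G) * L = 0 := by rw [sub_mul, one_mul, hG, sub_self]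
  have hPA : (1 - L * G) * A = 0 := by
    refine mul_diagonal_mul_transpose_eq_zero hw ?_
    calc (1 - L * G) * A * diagonal w * ((1 - L * G) * A)ᵀ
        = (1 - L * G) * L * (1 - L * G)ᵀ := by simp only [L, transpose_mul, Matrix.mul_assoc]
      _ = 0 := by rw [hP, Matrix.zero_mul]
  rw [Matrix.sub_mul, Matrix.one_mul, sub_eq_zero] at hPA
  exact hPA.symm

end Matrix

lemma IsIncidenceMatrix.col_eq {V E : Type*} [DecidableEq V] {B : Matrix V E ℝ}
    (hB : IsIncidenceMatrix B) {e : E} {u v : V} (hu : B u e = 1) (hv : B v e = -1) :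
    B.col e = Pi.single u 1 - Pi.single v 1 := by
  obtain ⟨i, j, hij, hi, hj, hzero⟩ := hB e
  have hui : u = i := by
    by_contra h
    have huj : u ≠ j := by rintro rfl; linarith
    linarith [hzero u h huj]
  have hvj : v = j := by
    by_contra h
    have hvi : v ≠ i := by rintro rfl; linarith
    linarith [hzero v hvi h]
  subst hui hvj
  ext k
  by_cases hku : k = u
  · subst hku; simp [hu, hij]
  by_cases hkv : k = v
  · subst hkv; simp [hv, hij.symm]
  simp [hzero k hku hkv, hku, hkv]

theorem single_edge_attack_uniform_margin_general
    {V E : Type*} [Fintype V] [Fintype E]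
    [DecidableEq V] [DecidableEq E] [Nonempty E]
    (B : Matrix V E ℝ) (hB : IsIncidenceMatrix B)
    (w : E → ℝ) (hw : ∀ e, 0 < w e)
    -- `Ld` is the Moore–Penrose pseudoinverse of `L = B·W·Bᵀ`
    (Ld : Matrix V V ℝ)
    (hp1 : (B * Matrix.diagonal w * Bᵀ) * Ld * (B * Matrix.diagonal w * Bᵀ) =
      B * Matrix.diagonal w * Bᵀ)
    -- `R k` is the effective resistance between the endpoints of edge `k`
    (R : E → ℝ)
    (hR : ∀ k : E, ∀ u v : V, B u k = 1 → B v k = -1 →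
      R k = (Pi.single u 1 - Pi.single v 1) ⬝ᵥ Ld.mulVec (Pi.single u 1 - Pi.single v 1)) :
    ∀ i : E, ∀ u v : V, B u i = 1 → B v i = -1 →
      ∀ δ : ℝ, |δ| < (Finset.univ.sup' Finset.univ_nonempty R)⁻¹ →
        (B * Matrix.diagonal w * Bᵀ +
            δ • Matrix.vecMulVec (Pi.single u 1 - Pi.single v 1)
              (Pi.single u 1 - Pi.single v 1)).PosSemidef := by
  intro i u v hu hv δ hδ
  set L := B * diagonal w * Bᵀ
  set b : V → ℝ := Pi.single u 1 - Pi.single v 1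
  set Rmax := Finset.univ.sup' Finset.univ_nonempty R
  have hL : L.PosSemidef := by
    simpa [conjTranspose_eq_transpose_of_trivial] using
      (PosSemidef.diagonal fun e => (hw e).le).mul_mul_conjTranspose_same B
  have hLy : L *ᵥ (Ld *ᵥ b) = b := by
    rw [← show B.col i = b from hB.col_eq hu hv, ← mulVec_single_one, mulVec_mulVec,
      mulVec_mulVec, mul_diagonal_mul_transpose_mul_mul_eq_self hw hp1]
  have hb : ∀ x, (b ⬝ᵥ x) ^ 2 ≤ Rmax * (x ⬝ᵥ L *ᵥ x) := fun x =>
    calc (b ⬝ᵥ x) ^ 2 ≤ R i * (x ⬝ᵥ L *ᵥ x) := by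
          simpa only [hR i u v hu hv] using hL.sq_dotProduct_le_of_mulVec_eq hLy x
      _ ≤ Rmax * (x ⬝ᵥ L *ᵥ x) :=
          mul_le_mul_of_nonneg_right (Finset.le_sup' R (Finset.mem_univ i))
            (by simpa using hL.dotProduct_mulVec_nonneg x)
  have hRmax : 0 < Rmax := inv_pos.mp ((abs_nonneg δ).trans_lt hδ)
  have hδRmax : |δ| * Rmax ≤ 1 := ((lt_inv_mul_iff₀' hRmax).mp (by rwa [mul_one])).le
  exact hL.add_smul_vecMulVec_self_of_sq_dotProduct_le hb hδRmax

/-- if `R : E → ℝ` records the effective resistance across each edge, then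
for every edge `i` and every `δ` with `|δ| < (max_k R_k)⁻¹`, the Laplacian perturbed by
`δ` on edge `i` remains positive semidefinite. -/
theorem single_edge_attack_uniform_margin
    {V E : Type*} [Fintype V] [Fintype E]
    [DecidableEq V] [DecidableEq E] [Nonempty V] [Nonempty E]
    (B : Matrix V E ℝ) (hB : IsIncidenceMatrix B)
    (w : E → ℝ) (hw : ∀ e, 0 < w e)
    -- the graph is connected
    (hConn : LinearMap.ker Bᵀ.mulVecLin = Submodule.span ℝ {(fun _ : V => (1 : ℝ))})
    -- `Ld` is the Moore–Penrose pseudoinverse of `L = B·W·Bᵀ`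
    (Ld : Matrix V V ℝ)
    (hp1 : (B * Matrix.diagonal w * Bᵀ) * Ld * (B * Matrix.diagonal w * Bᵀ) =
      B * Matrix.diagonal w * Bᵀ)
    (hp2 : Ld * (B * Matrix.diagonal w * Bᵀ) * Ld = Ld)
    (hp3 : ((B * Matrix.diagonal w * Bᵀ) * Ld)ᵀ = (B * Matrix.diagonal w * Bᵀ) * Ld)
    (hp4 : (Ld * (B * Matrix.diagonal w * Bᵀ))ᵀ = Ld * (B * Matrix.diagonal w * Bᵀ))
    -- `R k` is the effective resistance between the endpoints of edge `k`
    (R : E → ℝ)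
    (hR : ∀ k : E, ∀ u v : V, B u k = 1 → B v k = -1 →
      R k = (Pi.single u 1 - Pi.single v 1) ⬝ᵥ Ld.mulVec (Pi.single u 1 - Pi.single v 1)) :
    ∀ i : E, ∀ u v : V, B u i = 1 → B v i = -1 →
      ∀ δ : ℝ, |δ| < (Finset.univ.sup' Finset.univ_nonempty R)⁻¹ →
        (B * Matrix.diagonal w * Bᵀ +
            δ • Matrix.vecMulVec (Pi.single u 1 - Pi.single v 1)
              (Pi.single u 1 - Pi.single v 1)).PosSemidef :=
  single_edge_attack_uniform_margin_general B hB w hw Ld hp1 R hR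
end

section
/- Let L = B₊·W₊·B₊ᵀ − B₋·D·B₋ᵀ be the weighted Laplacian of a signed graph with W₊ and D diagonal having strictly positive entries, and suppose the full graph is connected (the null space of [B₊ B₋]ᵀ equals the span of the all-ones vector) while the negative edges form a cut, i.e. the positive subgraph is not connected (the null space of B₊ᵀ has dimension at least 2). Then the consensus dynamics ẋ = −L·x is unstable: there exists an initial condition x₀ ∈ ℝ^V such that ‖exp(−t·L)·x₀‖ → ∞ as t → ∞, where exp is the matrix exponential. -/
open Matrix

/-! A vector `x` that is constant on each connected component of the positive subgraph but not
globally constant satisfies `B₊ᵀ x = 0`, and by connectivity of the full graph `B₋ᵀ x ≠ 0`. Hence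
`xᵀ L x = -∑ dₑ (B₋ᵀ x)ₑ² < 0`, so the symmetric matrix `L` has a negative eigenvalue `μ`, and
along an eigenvector `v` the solution is `exp(-t L) v = exp(-t μ) v`, which blows up. -/

section MatrixExp

attribute [local instance] Matrix.linftyOpNormedAddCommGroup Matrix.linftyOpNormedRing
  Matrix.linftyOpNormedAlgebra

variable {𝕂 n : Type*} [RCLike 𝕂] [Fintype n] [DecidableEq n]

theorem Matrix.exp_mulVec_of_mulVec_eq_smul {A : Matrix n n 𝕂} {v : n → 𝕂} {c : 𝕂}
    (h : A *ᵥ v = c • v) : NormedSpace.exp A *ᵥ v = NormedSpace.exp c • v := by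
  have hpow (k : ℕ) : A ^ k *ᵥ v = c ^ k • v := by
    induction k with
    | zero => simp
    | succ k ih => rw [pow_succ', ← mulVec_mulVec, ih, mulVec_smul, h, smul_smul, ← pow_succ]
  let evalAt : Matrix n n 𝕂 →L[𝕂] (n → 𝕂) :=
    LinearMap.toContinuousLinearMap ((LinearMap.applyₗ v).comp (toLin' : _ ≃ₗ[𝕂] _).toLinearMap)
  have hA := (NormedSpace.exp_series_hasSum_exp' (𝕂 := 𝕂) A).mapL evalAt
  have hc := (NormedSpace.exp_series_hasSum_exp' (𝕂 := 𝕂) c).smul_const v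
  refine hA.unique ?_
  convert hc using 2 with k
  change ((k.factorial : 𝕂)⁻¹ • A ^ k) *ᵥ v = _
  rw [smul_mulVec, hpow, smul_smul, smul_eq_mul]

end MatrixExp

section

variable {n : Type*} [Fintype n] [DecidableEq n]

theorem Matrix.tendsto_norm_exp_neg_smul_mulVec_atTop {L : Matrix n n ℝ} {μ : ℝ} {v : n → ℝ}
    (hμ : μ < 0) (hv : v ≠ 0) (hLv : L *ᵥ v = μ • v) :
    Filter.Tendsto (fun t : ℝ => ‖NormedSpace.exp (-(t • L)) *ᵥ v‖) Filter.atTop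
      Filter.atTop := by
  have hnorm (t : ℝ) : ‖NormedSpace.exp (-(t • L)) *ᵥ v‖ = Real.exp (t * -μ) * ‖v‖ := by
    have htLv : (-(t • L)) *ᵥ v = (t * -μ) • v := by
      rw [neg_mulVec, smul_mulVec, hLv, smul_smul, ← neg_smul, mul_neg]
    rw [exp_mulVec_of_mulVec_eq_smul htLv, ← Real.exp_eq_exp_ℝ, norm_smul, Real.norm_eq_abs,
      abs_of_pos (Real.exp_pos _)]
  simp only [hnorm]
  exact (Real.tendsto_exp_atTop.comp
    (Filter.tendsto_id.atTop_mul_const (neg_pos.mpr hμ))).atTop_mul_const (norm_pos_iff.mpr hv)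

open scoped ComplexOrder in
theorem Matrix.IsHermitian.exists_neg_eigenvalue_of_not_posSemidef {𝕜 : Type*} [RCLike 𝕜]
    {L : Matrix n n 𝕜} (hL : L.IsHermitian) (hL' : ¬ L.PosSemidef) :
    ∃ μ < (0 : ℝ), ∃ v ≠ 0, L *ᵥ v = μ • v := by
  obtain ⟨i, hi⟩ : ∃ i, hL.eigenvalues i < 0 := by
    by_contra! h
    exact hL' (hL.posSemidef_iff_eigenvalues_nonneg.mpr h)
  exact ⟨hL.eigenvalues i, hi, hL.eigenvectorBasis i,
    (WithLp.ofLp_eq_zero 2).ne.2 (hL.eigenvectorBasis.orthonormal.ne_zero i),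
    hL.mulVec_eigenvectorBasis i⟩

end

theorem Matrix.ker_transpose_fromCols_mulVecLin_s17 {R m n₁ n₂ : Type*} [CommRing R] [Fintype m]
    (A₁ : Matrix m n₁ R) (A₂ : Matrix m n₂ R) :
    LinearMap.ker (fromCols A₁ A₂)ᵀ.mulVecLin =
      LinearMap.ker A₁ᵀ.mulVecLin ⊓ LinearMap.ker A₂ᵀ.mulVecLin := by
  ext x
  simp [transpose_fromCols, fromRows_mulVec, ← Sum.elim_zero_zero, Sum.elim_eq_iff,
    mulVec_transpose]

theorem Matrix.exists_transpose_mulVec_eq_zero_ne_zero_of_finrank_lt {R m n₁ n₂ : Type*}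
    [Field R] [Fintype m] {A₁ : Matrix m n₁ R} {A₂ : Matrix m n₂ R}
    (h : Module.finrank R (LinearMap.ker (fromCols A₁ A₂)ᵀ.mulVecLin) <
      Module.finrank R (LinearMap.ker A₁ᵀ.mulVecLin)) :
    ∃ x, A₁ᵀ *ᵥ x = 0 ∧ A₂ᵀ *ᵥ x ≠ 0 := by
  by_contra! hx
  refine h.not_ge (Submodule.finrank_mono fun x hx₁ => ?_)
  rw [ker_transpose_fromCols_mulVecLin_s17]
  exact ⟨hx₁, hx x hx₁⟩

theorem Matrix.dotProduct_mul_diagonal_mul_transpose_mulVec_s17 {R V E : Type*} [CommRing R]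
    [Fintype V] [Fintype E] [DecidableEq E] (B : Matrix V E R) (w : E → R) (x : V → R) :
    x ⬝ᵥ (B * diagonal w * Bᵀ) *ᵥ x = ∑ e, w e * (Bᵀ *ᵥ x) e ^ 2 := by
  rw [← mulVec_mulVec, ← mulVec_mulVec, dotProduct_mulVec, ← mulVec_transpose]
  simp only [dotProduct, mulVec_diagonal]
  exact Finset.sum_congr rfl fun e _ => by ring

section SignedLaplacian

variable {V Ep Em : Type*} [Fintype Ep] [Fintype Em] [DecidableEq Ep] [DecidableEq Em]

def signedLaplacian (Bp : Matrix V Ep ℝ) (wp : Ep → ℝ) (Bm : Matrix V Em ℝ) (d : Em → ℝ) :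
    Matrix V V ℝ :=
  Bp * diagonal wp * Bpᵀ - Bm * diagonal d * Bmᵀ

theorem isHermitian_signedLaplacian (Bp : Matrix V Ep ℝ) (wp : Ep → ℝ) (Bm : Matrix V Em ℝ)
    (d : Em → ℝ) : (signedLaplacian Bp wp Bm d).IsHermitian := by
  simpa [signedLaplacian, conjTranspose_eq_transpose_of_trivial] using
    (isHermitian_mul_mul_conjTranspose Bp (isHermitian_diagonal wp)).sub
      (isHermitian_mul_mul_conjTranspose Bm (isHermitian_diagonal d))

theorem not_posSemidef_signedLaplacian [Fintype V] {Bp : Matrix V Ep ℝ} (wp : Ep → ℝ)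
    {Bm : Matrix V Em ℝ} {d : Em → ℝ} (hd : ∀ e, 0 < d e) {x : V → ℝ} (hxp : Bpᵀ *ᵥ x = 0)
    (hxm : Bmᵀ *ᵥ x ≠ 0) : ¬ (signedLaplacian Bp wp Bm d).PosSemidef := by
  have hform : x ⬝ᵥ signedLaplacian Bp wp Bm d *ᵥ x = -∑ e, d e * (Bmᵀ *ᵥ x) e ^ 2 := by
    simp [signedLaplacian, sub_mulVec, dotProduct_mul_diagonal_mul_transpose_mulVec_s17, hxp]
  obtain ⟨e, he⟩ := Function.ne_iff.mp hxm
  have hpos : 0 < ∑ e, d e * (Bmᵀ *ᵥ x) e ^ 2 :=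
    Finset.sum_pos' (fun e _ => mul_nonneg (hd e).le (sq_nonneg _))
      ⟨e, Finset.mem_univ e, mul_pos (hd e) (sq_pos_of_ne_zero he)⟩
  intro hL
  have hnonneg := hL.dotProduct_mulVec_nonneg x
  rw [star_trivial] at hnonneg
  linarith

end SignedLaplacian

theorem negative_cut_consensus_unstable_general
    {V Ep Em : Type*} [Fintype V] [Fintype Ep] [Fintype Em]
    [DecidableEq V] [DecidableEq Ep] [DecidableEq Em]
    (Bp : Matrix V Ep ℝ) (Bm : Matrix V Em ℝ)
    (wp : Ep → ℝ)
    (d : Em → ℝ) (hd : ∀ e, 0 < d e)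
    -- the full graph is connected
    (hConn : LinearMap.ker (Matrix.fromCols Bp Bm)ᵀ.mulVecLin =
      Submodule.span ℝ {(fun _ : V => (1 : ℝ))})
    -- the positive subgraph is not connected (the negative edges form a cut)
    (hNotConn : 2 ≤ Module.finrank ℝ (LinearMap.ker Bpᵀ.mulVecLin)) :
    ∃ x₀ : V → ℝ,
      Filter.Tendsto
        (fun t : ℝ =>
          ‖(NormedSpace.exp
              (-(t • (Bp * Matrix.diagonal wp * Bpᵀ - Bm * Matrix.diagonal d * Bmᵀ)))).mulVec x₀‖)
        Filter.atTop Filter.atTop := by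
  obtain ⟨x, hxp, hxm⟩ : ∃ x, Bpᵀ *ᵥ x = 0 ∧ Bmᵀ *ᵥ x ≠ 0 := by
    refine exists_transpose_mulVec_eq_zero_ne_zero_of_finrank_lt ?_
    rw [hConn]
    exact (finrank_span_le_card _).trans_lt (by simpa using Nat.lt_of_succ_le hNotConn)
  obtain ⟨μ, hμ, v, hv, hLv⟩ :=
    (isHermitian_signedLaplacian Bp wp Bm d).exists_neg_eigenvalue_of_not_posSemidef
      (not_posSemidef_signedLaplacian wp hd hxp hxm)
  exact ⟨v, tendsto_norm_exp_neg_smul_mulVec_atTop hμ hv hLv⟩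

/-- if the full signed graph is connected but the negative edges form a
cut (the positive subgraph is not connected), the consensus dynamics `ẋ = −L·x` is
unstable: some solution `t ↦ exp(−t·L)·x₀` blows up. -/
theorem negative_cut_consensus_unstable
    {V Ep Em : Type*} [Fintype V] [Fintype Ep] [Fintype Em]
    [DecidableEq V] [DecidableEq Ep] [DecidableEq Em] [Nonempty V]
    (Bp : Matrix V Ep ℝ) (Bm : Matrix V Em ℝ)
    (hBp : IsIncidenceMatrix Bp) (hBm : IsIncidenceMatrix Bm)
    (wp : Ep → ℝ) (hwp : ∀ e, 0 < wp e)
    (d : Em → ℝ) (hd : ∀ e, 0 < d e)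
    -- the full graph is connected
    (hConn : LinearMap.ker (Matrix.fromCols Bp Bm)ᵀ.mulVecLin =
      Submodule.span ℝ {(fun _ : V => (1 : ℝ))})
    -- the positive subgraph is not connected (the negative edges form a cut)
    (hNotConn : 2 ≤ Module.finrank ℝ (LinearMap.ker Bpᵀ.mulVecLin)) :
    ∃ x₀ : V → ℝ,
      Filter.Tendsto
        (fun t : ℝ =>
          ‖(NormedSpace.exp
              (-(t • (Bp * Matrix.diagonal wp * Bpᵀ - Bm * Matrix.diagonal d * Bmᵀ)))).mulVec x₀‖)
        Filter.atTop Filter.atTop :=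
  negative_cut_consensus_unstable_general Bp Bm wp d hd hConn hNotConn
end
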